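/- arXiv:2405.06423 — 5 statements merged into one kernel-verified Lean document; each statement's English description precedes it below -/
import Mathlib

section
/- Let α ≤ β be real numbers and let g: ℝ → ℂ be measurable with ‖g‖_{Lip(α,β)} := sup_{α≤x≤β} |g(x)| + ((β−α)/2)·sup_{α≤x<y≤β} |g(y)−g(x)|/|y−x| < ∞. Then for every n ∈ ℤ, |∫_α^β g(x) e^{inx} dx| ≤ 2π (β−α) ‖g‖_{Lip(α,β)} (1 + |n|(β−α))^{−1}. -/
open MeasureTheory
open scoped Real

lemma norm_exp_I_mul (n : ℤ) (x : ℝ) : ‖Complex.exp (Complex.I * (n : ℂ) * (x : ℂ))‖ = 1 := by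
  have : Complex.I * (n : ℂ) * (x : ℂ) = (((n : ℝ) * x : ℝ) : ℂ) * Complex.I := by
    push_cast; ring
  rw [this, Complex.norm_exp_ofReal_mul_I]

lemma van_der_Corput_aux {α β : ℝ} (hab : α ≤ β) {g : ℝ → ℂ} (hg_meas : Measurable g)
    {B L : ℝ} (hgB : ∀ x ∈ Set.Icc α β, ‖g x‖ ≤ B)
    (hgL : ∀ x ∈ Set.Icc α β, ∀ y ∈ Set.Icc α β, ‖g y - g x‖ ≤ L * |y - x|)
    {n : ℤ} (hn : 0 ≤ n) :
    ‖∫ x in α..β, g x * Complex.exp (Complex.I * (n : ℂ) * (x : ℂ))‖ ≤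
      2 * π * (β - α) * (B + (β - α) / 2 * L) * (1 + |(n : ℝ)| * (β - α))⁻¹ := by
  rcases eq_or_lt_of_le hab with rfl | hab'
  · simp
  clear hab
  have hπ : (0 : ℝ) < π := Real.pi_pos
  have hπ1 : (1 : ℝ) < π := by nlinarith [Real.pi_gt_three]
  have hnn : |(n : ℝ)| = (n : ℝ) := abs_of_nonneg (by exact_mod_cast hn)
  have hB0 : 0 ≤ B := le_trans (norm_nonneg _) (hgB α ⟨le_refl _, hab'.le⟩)
  have hL0 : 0 ≤ L := by
    have h1 := hgL α ⟨le_refl _, hab'.le⟩ β ⟨hab'.le, le_refl _⟩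
    rw [abs_of_pos (by linarith)] at h1
    nlinarith [norm_nonneg (g β - g α)]
  have hn0R : (0:ℝ) ≤ (n:ℝ) := by exact_mod_cast hn
  have h1x : (0:ℝ) < 1 + (n : ℝ) * (β - α) := by nlinarith
  rw [hnn]
  set F : ℝ → ℂ := fun x => g x * Complex.exp (Complex.I * (n : ℂ) * (x : ℂ)) with hFdef
  have hFnorm : ∀ x, ‖F x‖ = ‖g x‖ := by
    intro x; rw [hFdef]; simp only [norm_mul, norm_exp_I_mul, mul_one]
  have hFmeas : Measurable F := by
    apply hg_meas.mul
    exact Complex.measurable_exp.comp ((Complex.measurable_ofReal).const_mul _)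
  have hintF : ∀ a b : ℝ, α ≤ a → α ≤ b → a ≤ β → b ≤ β →
      IntervalIntegrable F volume a b := by
    intro a b ha hb ha' hb'
    apply (intervalIntegrable_const (c := (B:ℂ))).mono_fun
      hFmeas.aestronglyMeasurable.restrict
    filter_upwards [ae_restrict_mem measurableSet_uIoc] with x hx
    have hx' : x ∈ Set.Icc α β := by
      rcases hx with ⟨h1, h2⟩
      constructor
      · calc α ≤ min a b := le_min ha hb
          _ ≤ x := h1.le
      · calc x ≤ max a b := h2
          _ ≤ β := max_le ha' hb'
    rw [hFnorm]
    simpa [Complex.norm_real, abs_of_nonneg hB0] using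
      (hgB x hx').trans (le_abs_self B)
  rcases le_or_gt ((n:ℝ) * (β - α)) (2*π - 1) with hcase | hcase
  · -- trivial bound
    have htriv : ‖∫ x in α..β, F x‖ ≤ B * |β - α| := by
      apply intervalIntegral.norm_integral_le_of_norm_le_const
      intro x hx
      rw [Set.uIoc_of_le hab'.le] at hx
      rw [hFnorm]
      exact hgB x ⟨hx.1.le, hx.2⟩
    rw [abs_of_pos (by linarith)] at htriv
    refine htriv.trans ?_
    rw [show 2 * π * (β - α) * (B + (β - α) / 2 * L) * (1 + (n:ℝ) * (β - α))⁻¹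
        = (2 * π * (β - α) * (B + (β - α) / 2 * L)) / (1 + (n:ℝ) * (β - α)) by ring,
      le_div_iff₀ h1x]
    nlinarith [mul_nonneg (mul_nonneg hB0 (by linarith : (0:ℝ) ≤ β - α))
        (by linarith : (0:ℝ) ≤ 2*π - 1 - (n:ℝ)*(β-α)),
      mul_nonneg (mul_nonneg hL0 (by linarith : (0:ℝ) ≤ β - α))
        (by linarith : (0:ℝ) ≤ β - α)]
  · -- van der Corput shift
    have hn0 : (0:ℝ) < (n:ℝ) := by nlinarith
    set T : ℝ := π / (n:ℝ) with hTdef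
    have hT0 : 0 < T := div_pos hπ hn0
    have hx1 : 1 ≤ (n:ℝ) * (β - α) := by nlinarith
    have hTle : T ≤ β - α := by
      rw [hTdef, div_le_iff₀ hn0]
      nlinarith
    have hshift : ∀ x : ℝ, Complex.exp (Complex.I * (n : ℂ) * ((x + T : ℝ) : ℂ))
        = - Complex.exp (Complex.I * (n : ℂ) * (x : ℂ)) := by
      intro x
      have hneZ : ((n:ℤ) : ℂ) ≠ 0 := by exact_mod_cast hn0.ne'
      have hnT : ((n:ℤ) : ℂ) * ((T:ℝ) : ℂ) = (π : ℂ) := by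
        rw [hTdef]; push_cast; field_simp
      have heq : Complex.I * (n : ℂ) * ((x + T : ℝ) : ℂ)
          = Complex.I * (n : ℂ) * (x : ℂ) + (π : ℂ) * Complex.I := by
        push_cast
        push_cast at hnT
        linear_combination Complex.I * hnT
      rw [heq, Complex.exp_add, Complex.exp_pi_mul_I, mul_neg_one]
    set H : ℝ → ℂ := fun x => g (x + T) * Complex.exp (Complex.I * (n : ℂ) * (x : ℂ)) with hHdef
    have hHnorm : ∀ x, ‖H x‖ = ‖g (x + T)‖ := by
      intro x; rw [hHdef]; simp only [norm_mul, norm_exp_I_mul, mul_one]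
    have hHmeas : Measurable H := by
      apply Measurable.mul
      · exact hg_meas.comp (measurable_id.add_const T)
      · exact Complex.measurable_exp.comp ((Complex.measurable_ofReal).const_mul _)
    have hintH : ∀ a b : ℝ, α ≤ a + T → α ≤ b + T → a + T ≤ β → b + T ≤ β →
        IntervalIntegrable H volume a b := by
      intro a b ha hb ha' hb'
      apply (intervalIntegrable_const (c := (B:ℂ))).mono_fun
        hHmeas.aestronglyMeasurable.restrict
      filter_upwards [ae_restrict_mem measurableSet_uIoc] with x hx
      have hx' : x + T ∈ Set.Icc α β := by
        rcases hx with ⟨h1, h2⟩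
        constructor
        · calc α ≤ min a b + T := by rcases min_cases a b with ⟨h,_⟩|⟨h,_⟩ <;> rw [h] <;> assumption
            _ ≤ x + T := by linarith [h1.le]
        · calc x + T ≤ max a b + T := by linarith [h2]
            _ ≤ β := by rcases max_cases a b with ⟨h,_⟩|⟨h,_⟩ <;> rw [h] <;> assumption
      rw [hHnorm]
      simpa [Complex.norm_real, abs_of_nonneg hB0] using
        (hgB _ hx').trans (le_abs_self B)
    have hrev : ∫ x in (α - T)..(β - T), H x = - ∫ x in α..β, F x := by
      have h1 : ∀ x : ℝ, H x = -(F (x + T)) := by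
        intro x
        rw [hHdef, hFdef]
        simp only
        rw [hshift x]
        ring
      rw [intervalIntegral.integral_congr (fun x _ => h1 x)]
      rw [intervalIntegral.integral_neg, intervalIntegral.integral_comp_add_right]
      norm_num
    have hi1 : IntervalIntegrable F volume α (β - T) :=
      hintF _ _ (by linarith) (by linarith) (by linarith) (by linarith)
    have hi2 : IntervalIntegrable F volume (β - T) β :=
      hintF _ _ (by linarith) (by linarith) (by linarith) (by linarith)
    have hi3 : IntervalIntegrable H volume (α - T) α :=
      hintH _ _ (by linarith) (by linarith) (by linarith) (by linarith)
    have hi4 : IntervalIntegrable H volume α (β - T) :=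
      hintH _ _ (by linarith) (by linarith) (by linarith) (by linarith)
    have hsplit1 : ∫ x in α..β, F x
        = (∫ x in α..(β - T), F x) + ∫ x in (β - T)..β, F x :=
      (intervalIntegral.integral_add_adjacent_intervals hi1 hi2).symm
    have hsplit2 : ∫ x in (α - T)..(β - T), H x
        = (∫ x in (α - T)..α, H x) + ∫ x in α..(β - T), H x :=
      (intervalIntegral.integral_add_adjacent_intervals hi3 hi4).symm
    have key : (∫ x in α..β, F x) + (∫ x in α..β, F x)
        = (∫ x in α..(β - T), (F x - H x)) + (∫ x in (β - T)..β, F x)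
          - ∫ x in (α - T)..α, H x := by
      rw [intervalIntegral.integral_sub hi1 hi4]
      linear_combination hsplit1 - hsplit2 + hrev
    have hD : ‖∫ x in α..(β - T), (F x - H x)‖ ≤ L * T * (β - T - α) := by
      have := intervalIntegral.norm_integral_le_of_norm_le_const (C := L * T)
        (f := fun x => F x - H x) (a := α) (b := β - T) ?_
      · rwa [abs_of_nonneg (by linarith)] at this
      · intro x hx
        rw [Set.uIoc_of_le (by linarith)] at hx
        show ‖F x - H x‖ ≤ L * T
        have hx1 : x ∈ Set.Icc α β := ⟨hx.1.le, by linarith [hx.2]⟩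
        have hx2 : x + T ∈ Set.Icc α β := ⟨by linarith [hx.1.le], by linarith [hx.2]⟩
        have : F x - H x = (g x - g (x + T)) * Complex.exp (Complex.I * (n:ℂ) * (x:ℂ)) := by
          rw [hFdef, hHdef]; ring
        rw [this, norm_mul, norm_exp_I_mul, mul_one, ← norm_neg, neg_sub]
        have := hgL x hx1 (x + T) hx2
        rwa [show |x + T - x| = T by rw [add_sub_cancel_left, abs_of_pos hT0]] at this
    have hE1 : ‖∫ x in (β - T)..β, F x‖ ≤ B * T := by
      have := intervalIntegral.norm_integral_le_of_norm_le_const (C := B)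
        (f := F) (a := β - T) (b := β) ?_
      · rwa [show |β - (β - T)| = T by rw [abs_of_pos (by linarith)]; ring] at this
      · intro x hx
        rw [Set.uIoc_of_le (by linarith)] at hx
        rw [hFnorm]
        exact hgB x ⟨by linarith [hx.1.le], hx.2⟩
    have hE2 : ‖∫ x in (α - T)..α, H x‖ ≤ B * T := by
      have := intervalIntegral.norm_integral_le_of_norm_le_const (C := B)
        (f := H) (a := α - T) (b := α) ?_
      · rwa [show |α - (α - T)| = T by rw [abs_of_pos (by linarith)]; ring] at this
      · intro x hx
        rw [Set.uIoc_of_le (by linarith)] at hx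
        rw [hHnorm]
        exact hgB _ ⟨by linarith [hx.1.le], by linarith [hx.2]⟩
    have h2I : 2 * ‖∫ x in α..β, F x‖ ≤ L * T * (β - T - α) + B * T + B * T := by
      have hnorm2 : ‖(∫ x in α..β, F x) + (∫ x in α..β, F x)‖
          = 2 * ‖∫ x in α..β, F x‖ := by
        rw [← two_mul, norm_mul]
        norm_num
      rw [← hnorm2, key]
      calc ‖_ + _ - _‖ ≤ ‖(∫ x in α..(β - T), (F x - H x)) + (∫ x in (β - T)..β, F x)‖
            + ‖∫ x in (α - T)..α, H x‖ := norm_sub_le _ _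
        _ ≤ ‖∫ x in α..(β - T), (F x - H x)‖ + ‖∫ x in (β - T)..β, F x‖
            + ‖∫ x in (α - T)..α, H x‖ := by gcongr; exact norm_add_le _ _
        _ ≤ L * T * (β - T - α) + B * T + B * T := by gcongr
    have hstep : ‖∫ x in α..β, F x‖ ≤ T * (B + (β - α) / 2 * L) := by
      nlinarith [mul_nonneg (mul_nonneg hL0 hT0.le) hT0.le]
    refine hstep.trans ?_
    rw [show 2 * π * (β - α) * (B + (β - α) / 2 * L) * (1 + (n:ℝ) * (β - α))⁻¹
        = (2 * π * (β - α) * (B + (β - α) / 2 * L)) / (1 + (n:ℝ) * (β - α)) by ring,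
      hTdef, div_mul_eq_mul_div, div_le_div_iff₀ hn0 h1x]
    have hK0 : 0 ≤ B + (β - α) / 2 * L := by nlinarith
    nlinarith [mul_nonneg (mul_nonneg hπ.le hK0) (by linarith : (0:ℝ) ≤ (n:ℝ)*(β-α) - 1)]

lemma my_integral_conj {f : ℝ → ℂ} {a b : ℝ} :
    ∫ x in a..b, (starRingEnd ℂ) (f x) = (starRingEnd ℂ) (∫ x in a..b, f x) := by
  simp only [intervalIntegral.intervalIntegral_eq_integral_uIoc, ← integral_conj]
  simp only [Complex.real_smul]
  split_ifs <;> simp [← integral_conj]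

/-- **Van der Corput lemma**: if `g : ℝ → ℂ` is measurable on `[α, β]`, bounded by `B` and
Lipschitz with constant `L` there (so that its inhomogeneous Lipschitz norm
`‖g‖_{Lip(α,β)} = B + ((β-α)/2)·L`), then for every `n ∈ ℤ`
`|∫_α^β g(x) e^{inx} dx| ≤ 2π (β-α) (B + ((β-α)/2)·L) (1 + |n|(β-α))⁻¹`. -/
theorem van_der_Corput {α β : ℝ} (hab : α ≤ β) {g : ℝ → ℂ} (hg_meas : Measurable g)
    {B L : ℝ} (hgB : ∀ x ∈ Set.Icc α β, ‖g x‖ ≤ B)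
    (hgL : ∀ x ∈ Set.Icc α β, ∀ y ∈ Set.Icc α β, ‖g y - g x‖ ≤ L * |y - x|)
    (n : ℤ) :
    ‖∫ x in α..β, g x * Complex.exp (Complex.I * (n : ℂ) * (x : ℂ))‖ ≤
      2 * π * (β - α) * (B + (β - α) / 2 * L) * (1 + |(n : ℝ)| * (β - α))⁻¹ := by
  rcases le_or_gt 0 n with hn | hn
  · exact van_der_Corput_aux hab hg_meas hgB hgL hn
  · set g' : ℝ → ℂ := fun x => (starRingEnd ℂ) (g x) with hg'def
    have hg'_meas : Measurable g' := (Complex.continuous_conj.measurable).comp hg_meas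
    have hg'B : ∀ x ∈ Set.Icc α β, ‖g' x‖ ≤ B := by
      intro x hx; rw [hg'def]; simpa [RCLike.norm_conj] using hgB x hx
    have hg'L : ∀ x ∈ Set.Icc α β, ∀ y ∈ Set.Icc α β, ‖g' y - g' x‖ ≤ L * |y - x| := by
      intro x hx y hy
      rw [hg'def]
      simp only [← map_sub, RCLike.norm_conj]
      exact hgL x hx y hy
    have h := van_der_Corput_aux hab hg'_meas hg'B hg'L (n := -n) (by omega)
    have hpt : ∀ x : ℝ, g' x * Complex.exp (Complex.I * ((-n : ℤ) : ℂ) * (x : ℂ))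
        = (starRingEnd ℂ) (g x * Complex.exp (Complex.I * (n : ℂ) * (x : ℂ))) := by
      intro x
      rw [hg'def, map_mul, ← Complex.exp_conj]
      congr 2
      simp only [map_mul, Complex.conj_I, Complex.conj_ofReal, map_intCast]
      push_cast
      ring
    rw [intervalIntegral.integral_congr (fun x _ => hpt x), my_integral_conj,
      RCLike.norm_conj] at h
    refine h.trans (le_of_eq ?_)
    push_cast
    rw [abs_neg]
end

section
/- For all x, y, y' ∈ ℝ with x ≠ y, x ≠ y', and 2|y − y'| ≤ |x − y|, the Hilbert kernel satisfies |κ(x−y) − κ(x−y')| ≤ 2⁸ · (1/|x−y|) · (|y−y'|/|x−y|). -/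
lemma normsq_one_sub_exp (t : ℝ) :
    ‖(1 : ℂ) - Complex.exp (Complex.I * t)‖ ^ 2 = 2 - 2 * Real.cos t := by
  rw [mul_comm, Complex.exp_mul_I, ← Complex.ofReal_cos, ← Complex.ofReal_sin]
  rw [← Complex.normSq_eq_norm_sq]
  simp [Complex.normSq_apply, Complex.cos_ofReal_re, Complex.sin_ofReal_re]
  nlinarith [Real.sin_sq_add_cos_sq t]

lemma lower_one_sub_exp {t : ℝ} (ht : |t| ≤ Real.pi) :
    |t| / 2 ≤ ‖(1 : ℂ) - Complex.exp (Complex.I * t)‖ := by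
  have h1 := normsq_one_sub_exp t
  have h2 := Real.cos_le_one_sub_mul_cos_sq ht
  have h3 : (0:ℝ) ≤ ‖(1 : ℂ) - Complex.exp (Complex.I * t)‖ := norm_nonneg _
  have hπ : Real.pi ≤ 4 := Real.pi_le_four
  have hπ0 : 0 < Real.pi := Real.pi_pos
  have hp16 : Real.pi ^ 2 ≤ 16 := by nlinarith
  have h5 : (1:ℝ)/8 ≤ 2 / Real.pi ^ 2 := by
    rw [div_le_div_iff₀ (by norm_num) (by positivity)]
    nlinarith
  have h4 : t ^ 2 / 8 ≤ 2 / Real.pi ^ 2 * t ^ 2 := by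
    have := mul_le_mul_of_nonneg_right h5 (sq_nonneg t)
    linarith
  nlinarith [sq_abs t, sq_nonneg (‖(1 : ℂ) - Complex.exp (Complex.I * t)‖ - |t| / 2)]

lemma upper_one_sub_exp (t : ℝ) :
    ‖(1 : ℂ) - Complex.exp (Complex.I * t)‖ ≤ |t| := by
  have h1 := normsq_one_sub_exp t
  have h2 := Real.one_sub_sq_div_two_le_cos (x := t)
  have h3 : (0:ℝ) ≤ ‖(1 : ℂ) - Complex.exp (Complex.I * t)‖ := norm_nonneg _
  nlinarith [sq_abs t, abs_nonneg t]

lemma exp_I_diff_le (s t : ℝ) :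
    ‖Complex.exp (Complex.I * s) - Complex.exp (Complex.I * t)‖ ≤ |s - t| := by
  have heq : Complex.exp (Complex.I * s) - Complex.exp (Complex.I * t)
      = Complex.exp (Complex.I * t) * (-(1 - Complex.exp (Complex.I * ((s : ℝ) - t)))) := by
    rw [neg_sub, mul_sub, mul_one, ← Complex.exp_add]
    push_cast
    ring_nf
  rw [heq, norm_mul, norm_neg]
  have he : ‖Complex.exp (Complex.I * t)‖ = 1 := by
    rw [mul_comm, Complex.norm_exp_ofReal_mul_I]
  rw [he, one_mul]
  have h := upper_one_sub_exp (s - t)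
  push_cast at h
  exact h


/-- The Hilbert-type kernel `κ`: `κ(x) = (1 - |x|)/(1 - e^{ix})` for `0 < |x| < 1`,
and `κ(x) = 0` otherwise. -/
noncomputable def hilbertKernel (x : ℝ) : ℂ :=
  if 0 < |x| ∧ |x| < 1 then (1 - |x|) / (1 - Complex.exp (Complex.I * x)) else 0

/-- **Hilbert kernel regularity**: for `x ≠ y`, `x ≠ y'` with `2|y - y'| ≤ |x - y|`,
`|κ(x - y) - κ(x - y')| ≤ 2⁸ (1/|x - y|) (|y - y'|/|x - y|)`. -/
theorem Hilbert_kernel_regularity {x y y' : ℝ} (hxy : x ≠ y) (hxy' : x ≠ y')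
    (h : 2 * |y - y'| ≤ |x - y|) :
    ‖hilbertKernel (x - y) - hilbertKernel (x - y')‖ ≤
      2 ^ 8 * (1 / |x - y|) * (|y - y'| / |x - y|) := by
  set a := x - y with ha_def
  set a' := x - y' with ha'_def
  have ha : a ≠ 0 := sub_ne_zero.mpr hxy
  have ha' : a' ≠ 0 := sub_ne_zero.mpr hxy'
  have hA : 0 < |a| := abs_pos.mpr ha
  have hA' : 0 < |a'| := abs_pos.mpr ha'
  have hD0 : 0 ≤ |y - y'| := abs_nonneg _
  have hDd : |a - a'| = |y - y'| := by
    rw [show a - a' = y' - y by rw [ha_def, ha'_def]; ring, abs_sub_comm]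
  have hlow : |a| - |y - y'| ≤ |a'| := by
    have := abs_sub_abs_le_abs_sub a a'
    rw [hDd] at this; linarith
  have hup : |a'| ≤ |a| + |y - y'| := by
    have h1 := abs_sub_abs_le_abs_sub a' a
    have h2 : |a' - a| = |y - y'| := by rw [abs_sub_comm]; exact hDd
    rw [h2] at h1; linarith
  have hhalf : |a| / 2 ≤ |a'| := by linarith
  have hE0 : 0 ≤ |y - y'| / (|a| * |a|) := by positivity
  have hrhs : (2:ℝ) ^ 8 * (1 / |a|) * (|y - y'| / |a|) = 256 * (|y - y'| / (|a| * |a|)) := by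
    rw [show (2:ℝ) ^ 8 = 256 by norm_num, mul_assoc, div_mul_div_comm, one_mul]
  rw [hrhs]
  have hπ : (1:ℝ) ≤ Real.pi := by linarith [Real.pi_gt_three]
  have hsmall : ∀ t : ℝ, |t| < 1 → |t| ≤ Real.pi := fun t htl => by linarith
  by_cases h1 : |a| < 1 <;> by_cases h2 : |a'| < 1
  · -- both small
    rw [hilbertKernel, hilbertKernel, if_pos ⟨hA, h1⟩, if_pos ⟨hA', h2⟩]
    set P := (1 : ℂ) - Complex.exp (Complex.I * a) with hP_def
    set Q := (1 : ℂ) - Complex.exp (Complex.I * a') with hQ_def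
    have hPn : |a| / 2 ≤ ‖P‖ := lower_one_sub_exp (hsmall a h1)
    have hQn : |a'| / 2 ≤ ‖Q‖ := lower_one_sub_exp (hsmall a' h2)
    have hQn' : |a| / 4 ≤ ‖Q‖ := by linarith
    have hP0 : P ≠ 0 := by
      intro hc; rw [hc] at hPn; simp at hPn; linarith
    have hQ0 : Q ≠ 0 := by
      intro hc; rw [hc] at hQn; simp at hQn; linarith
    have key : (1 - ((|a| : ℝ) : ℂ)) / P - (1 - ((|a'| : ℝ) : ℂ)) / Q
        = ((|a'| - |a| : ℝ) : ℂ) / P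
          + ((1 - |a'| : ℝ) : ℂ) *
            (Complex.exp (Complex.I * a) - Complex.exp (Complex.I * a')) / (P * Q) := by
      have hPQ : Complex.exp (Complex.I * a) - Complex.exp (Complex.I * a') = Q - P := by
        rw [hP_def, hQ_def]; ring
      rw [hPQ]
      field_simp
      push_cast
      ring
    rw [key]
    have e1 : ‖((|a'| - |a| : ℝ) : ℂ) / P‖ ≤ |y - y'| / (|a| / 2) := by
      rw [norm_div, Complex.norm_real, Real.norm_eq_abs]
      apply div_le_div₀ hD0 _ (by linarith) hPn
      calc |(|a'| - |a|)| ≤ |a' - a| := abs_abs_sub_abs_le_abs_sub a' a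
        _ = |y - y'| := by rw [abs_sub_comm]; exact hDd
    have e2 : ‖((1 - |a'| : ℝ) : ℂ) *
          (Complex.exp (Complex.I * a) - Complex.exp (Complex.I * a')) / (P * Q)‖
        ≤ |y - y'| / (|a| / 2 * (|a| / 4)) := by
      rw [norm_div, norm_mul, norm_mul, Complex.norm_real, Real.norm_eq_abs]
      have hnum : |(1 - |a'|)| *
          ‖Complex.exp (Complex.I * a) - Complex.exp (Complex.I * a')‖ ≤ 1 * |y - y'| := by
        apply mul_le_mul _ _ (norm_nonneg _) zero_le_one
        · rw [abs_of_nonneg (by linarith)]; linarith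
        · calc ‖Complex.exp (Complex.I * a) - Complex.exp (Complex.I * a')‖
              ≤ |a - a'| := exp_I_diff_le a a'
            _ = |y - y'| := hDd
      rw [one_mul] at hnum
      apply div_le_div₀ hD0 hnum (by positivity)
      exact mul_le_mul hPn hQn' (by linarith) (norm_nonneg _)
    have hAA : |y - y'| / |a| ≤ |y - y'| / (|a| * |a|) := by
      rw [div_le_div_iff₀ hA (by positivity)]
      nlinarith [mul_nonneg hD0 hA.le]
    calc ‖_ + _‖ ≤ |y - y'| / (|a| / 2) + |y - y'| / (|a| / 2 * (|a| / 4)) :=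
          (norm_add_le _ _).trans (add_le_add e1 e2)
      _ = 2 * (|y - y'| / |a|) + 8 * (|y - y'| / (|a| * |a|)) := by
          rw [show |a| / 2 * (|a| / 4) = |a| * |a| / 8 by ring, div_div_eq_mul_div,
            div_div_eq_mul_div]
          ring
      _ ≤ 2 * (|y - y'| / (|a| * |a|)) + 8 * (|y - y'| / (|a| * |a|)) := by linarith
      _ ≤ 256 * (|y - y'| / (|a| * |a|)) := by linarith
  · -- |a| < 1 ≤ |a'|
    push_neg at h2
    rw [hilbertKernel, hilbertKernel, if_pos ⟨hA, h1⟩,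
      if_neg (by push_neg; intro; linarith), sub_zero]
    have hPn : |a| / 2 ≤ ‖(1 : ℂ) - Complex.exp (Complex.I * a)‖ :=
      lower_one_sub_exp (hsmall a h1)
    rw [show (1:ℂ) - ((|a| : ℝ) : ℂ) = ((1 - |a| : ℝ) : ℂ) by push_cast; ring]
    rw [norm_div, Complex.norm_real, Real.norm_eq_abs]
    have hAA : |y - y'| / |a| ≤ |y - y'| / (|a| * |a|) := by
      rw [div_le_div_iff₀ hA (by positivity)]
      nlinarith [mul_nonneg hD0 hA.le]
    calc |(1 - |a|)| / ‖(1 : ℂ) - Complex.exp (Complex.I * a)‖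
        ≤ |y - y'| / (|a| / 2) := by
          apply div_le_div₀ hD0 _ (by linarith) hPn
          rw [abs_of_nonneg (by linarith)]
          linarith
      _ = 2 * (|y - y'| / |a|) := by rw [div_div_eq_mul_div]; ring
      _ ≤ 2 * (|y - y'| / (|a| * |a|)) := by linarith
      _ ≤ 256 * (|y - y'| / (|a| * |a|)) := by linarith
  · -- |a'| < 1 ≤ |a|
    push_neg at h1
    rw [hilbertKernel, hilbertKernel, if_neg (by push_neg; intro; linarith),
      if_pos ⟨hA', h2⟩, zero_sub, norm_neg]
    have hQn : |a'| / 2 ≤ ‖(1 : ℂ) - Complex.exp (Complex.I * a')‖ :=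
      lower_one_sub_exp (hsmall a' h2)
    have hQn' : |a| / 4 ≤ ‖(1 : ℂ) - Complex.exp (Complex.I * a')‖ := by linarith
    have hA2 : |a| < 2 := by linarith
    rw [show (1:ℂ) - ((|a'| : ℝ) : ℂ) = ((1 - |a'| : ℝ) : ℂ) by push_cast; ring]
    rw [norm_div, Complex.norm_real, Real.norm_eq_abs]
    calc |(1 - |a'|)| / ‖(1 : ℂ) - Complex.exp (Complex.I * a')‖
        ≤ |y - y'| / (|a| / 4) := by
          apply div_le_div₀ hD0 _ (by linarith) hQn'
          rw [abs_of_nonneg (by linarith)]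
          linarith
      _ = 4 * (|y - y'| / |a|) := by rw [div_div_eq_mul_div]; ring
      _ ≤ 256 * (|y - y'| / (|a| * |a|)) := by
          have hstep : |y - y'| / |a| ≤ 2 * (|y - y'| / (|a| * |a|)) := by
            rw [show 2 * (|y - y'| / (|a| * |a|)) = 2 * |y - y'| / (|a| * |a|) by ring,
              div_le_div_iff₀ hA (by positivity)]
            nlinarith [mul_nonneg hD0 hA.le]
          linarith
  · -- both large
    push_neg at h1 h2
    rw [hilbertKernel, hilbertKernel, if_neg (by push_neg; intro; linarith),
      if_neg (by push_neg; intro; linarith), sub_zero, norm_zero]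
    positivity
end

section
/- Let g: ℝ → ℂ be a measurable 2π-periodic function with |g(x)| ≤ δ for some δ > 0 and every x ∈ ℝ. Then for every x ∈ [0,2π] and every integer N > 0, |S_N g(x)| ≤ (1/(2π))·(T g(x) + T ḡ(x)) + π δ, where ḡ denotes the complex conjugate of g. -/
open MeasureTheory
open scoped Real ENNReal NNReal
open Complex

/-- The `N`-th partial Fourier sum of a `2π`-periodic function `f`,
`S_N f(x) = ∑_{n=-N}^{N} f̂_n e^{inx}` with `f̂_n = (1/2π) ∫₀^{2π} f(y) e^{-iny} dy`. -/
noncomputable def partialFourierSum (N : ℕ) (f : ℝ → ℂ) (x : ℝ) : ℂ :=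
  ∑ n ∈ Finset.Icc (-(N : ℤ)) (N : ℤ),
    ((((2 * π)⁻¹ : ℝ) : ℂ) *
        ∫ y in (0 : ℝ)..(2 * π), f y * Complex.exp (-(Complex.I * (n : ℂ) * (y : ℂ)))) *
      Complex.exp (Complex.I * (n : ℂ) * (x : ℂ))

/-- The real Carleson operator
`T f(x) = sup_{n ∈ ℤ} sup_{r > 0} |∫_{r < |x - y| < 1} f(y) κ(x - y) e^{iny} dy|`. -/
noncomputable def carlesonOperatorReal (f : ℝ → ℂ) (x : ℝ) : ℝ≥0∞ :=
  ⨆ (n : ℤ) (r : ℝ) (_ : 0 < r),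
    (‖∫ y in {y : ℝ | r < |x - y| ∧ |x - y| < 1},
        f y * hilbertKernel (x - y) * Complex.exp (Complex.I * (n : ℂ) * (y : ℂ))‖₊ : ℝ≥0∞)


lemma geom_icc (z : ℂ) (hz : z ≠ 0) (N : ℕ) :
    (z - 1) * ∑ n ∈ Finset.Icc (-(N : ℤ)) (N : ℤ), z ^ n
      = z ^ ((N : ℤ) + 1) - z ^ (-(N : ℤ)) := by
  induction N with
  | zero => simp
  | succ M ih =>
    have hset : Finset.Icc (-((M:ℤ)+1)) ((M:ℤ)+1) =
        insert (-((M:ℤ)+1)) (insert ((M:ℤ)+1) (Finset.Icc (-(M:ℤ)) ((M:ℤ)))) := by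
      ext n; simp; omega
    push_cast
    rw [hset, Finset.sum_insert (by simp; omega), Finset.sum_insert (by simp)]
    have h1 : z ^ ((M:ℤ) + 1 + 1) = z * z ^ ((M:ℤ) + 1) := by
      rw [zpow_add_one₀ hz]; ring
    have h2 : z ^ (-((M:ℤ) + 1)) * z = z ^ (-(M:ℤ)) := by
      rw [← zpow_add_one₀ hz]; ring_nf
    have h3 : z ^ ((M:ℤ) + 1) = z * z ^ (M:ℤ) := by
      rw [zpow_add_one₀ hz]; ring
    linear_combination ih - h1 + h2

noncomputable def dirK (N : ℕ) (t : ℝ) : ℂ :=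
  ∑ n ∈ Finset.Icc (-(N : ℤ)) (N : ℤ), Complex.exp (Complex.I * (n : ℂ) * (t : ℂ))

lemma exp_zpow (t : ℝ) (n : ℤ) :
    Complex.exp (Complex.I * t) ^ n = Complex.exp (Complex.I * (n : ℂ) * (t : ℂ)) := by
  rw [← Complex.exp_int_mul]; ring_nf

lemma dirK_eq {N : ℕ} {t : ℝ} (ht : Complex.exp (Complex.I * t) ≠ 1) :
    dirK N t = Complex.exp (Complex.I * (N : ℂ) * t) / (1 - Complex.exp (-(Complex.I * t)))
      + Complex.exp (-(Complex.I * (N : ℂ) * t)) / (1 - Complex.exp (Complex.I * t)) := by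
  set z := Complex.exp (Complex.I * t) with hzdef
  have hz : z ≠ 0 := Complex.exp_ne_zero _
  have hgeom := geom_icc z hz N
  have hsum : dirK N t = ∑ n ∈ Finset.Icc (-(N : ℤ)) (N : ℤ), z ^ n := by
    unfold dirK; exact Finset.sum_congr rfl fun n _ => (exp_zpow t n).symm
  have hz1 : z - 1 ≠ 0 := sub_ne_zero.2 ht
  have hzinv : Complex.exp (-(Complex.I * t)) = z⁻¹ := by rw [hzdef, ← Complex.exp_neg]
  have hzN : Complex.exp (Complex.I * (N : ℂ) * t) = z ^ ((N : ℤ)) := by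
    rw [exp_zpow]; norm_num
  have hzN' : Complex.exp (-(Complex.I * (N : ℂ) * t)) = z ^ (-(N : ℤ)) := by
    rw [exp_zpow]; push_cast; ring_nf
  have hinv1 : (1 : ℂ) - z⁻¹ ≠ 0 := by
    intro h
    rw [sub_eq_zero] at h
    exact ht (inv_eq_one.mp h.symm)
  rw [hsum, hzinv, hzN, hzN']
  have hsum' : (∑ n ∈ Finset.Icc (-(N : ℤ)) (N : ℤ), z ^ n)
      = (z ^ ((N : ℤ) + 1) - z ^ (-(N : ℤ))) / (z - 1) := by
    rw [eq_div_iff hz1]; linear_combination hgeom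
  rw [hsum']
  have h1 : z ^ ((N : ℤ) + 1) = z * z ^ (N : ℤ) := by rw [zpow_add_one₀ hz]; ring
  have e1 : (1:ℂ) - z⁻¹ = (z-1)/z := by field_simp
  have e2 : (1:ℂ) - z = -(z-1) := by ring
  rw [e1, div_div_eq_mul_div, e2, div_neg, h1, sub_div]
  ring

lemma norm_one_sub_exp_ge {t : ℝ} (ht : |t| ≤ π) :
    2 / π * |t| ≤ ‖1 - Complex.exp (Complex.I * t)‖ := by
  have hπ := Real.pi_pos
  have hexp : Complex.exp (Complex.I * t) = Complex.exp ((t : ℂ) * Complex.I) := by ring_nf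
  have hform : (1 : ℂ) - Complex.exp (Complex.I * t)
      = ((1 - Real.cos t : ℝ) : ℂ) + ((-Real.sin t : ℝ) : ℂ) * Complex.I := by
    rw [hexp, Complex.exp_mul_I]
    push_cast [← Complex.ofReal_cos, ← Complex.ofReal_sin]
    ring
  rw [hform]
  have habs : ‖((1 - Real.cos t : ℝ) : ℂ) + ((-Real.sin t : ℝ) : ℂ) * Complex.I‖
      = Real.sqrt ((1 - Real.cos t) ^ 2 + (-Real.sin t) ^ 2) := by
    rw [Complex.norm_def, Complex.normSq_add_mul_I]
  rw [habs]
  have hcos := Real.cos_le_one_sub_mul_cos_sq ht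
  have hs := Real.sin_sq_add_cos_sq t
  have key : (2 / π * |t|) ^ 2 ≤ (1 - Real.cos t) ^ 2 + (-Real.sin t) ^ 2 := by
    have h1 : (1 - Real.cos t) ^ 2 + (-Real.sin t) ^ 2 = 2 - 2 * Real.cos t := by nlinarith
    rw [h1]
    have h2 : (2 / π * |t|) ^ 2 = 4 / π ^ 2 * t ^ 2 := by
      rw [mul_pow, _root_.sq_abs]; ring
    have h3 : 2 * (2 / π ^ 2 * t ^ 2) ≤ 2 - 2 * Real.cos t := by linarith
    have h4 : 2 * (2 / π ^ 2 * t ^ 2) = 4 / π ^ 2 * t ^ 2 := by ring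
    rw [h2]; linarith
  calc 2 / π * |t| = Real.sqrt ((2 / π * |t|) ^ 2) := by
        rw [Real.sqrt_sq (by positivity)]
    _ ≤ _ := Real.sqrt_le_sqrt key

lemma norm_one_sub_exp_ge' {t : ℝ} (ht : |t| ≤ π) :
    2 / π * |t| ≤ ‖1 - Complex.exp (-(Complex.I * t))‖ := by
  have : (1 : ℂ) - Complex.exp (-(Complex.I * t))
      = (starRingEnd ℂ) (1 - Complex.exp (Complex.I * t)) := by
    rw [map_sub, ← Complex.exp_conj]
    simp [Complex.conj_I]
  rw [this, RCLike.norm_conj]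
  exact norm_one_sub_exp_ge ht

lemma norm_dirK_le (N : ℕ) (t : ℝ) : ‖dirK N t‖ ≤ 2 * N + 1 := by
  unfold dirK
  calc ‖∑ n ∈ Finset.Icc (-(N : ℤ)) (N : ℤ), Complex.exp (Complex.I * (n : ℂ) * (t : ℂ))‖
      ≤ ∑ n ∈ Finset.Icc (-(N : ℤ)) (N : ℤ), ‖Complex.exp (Complex.I * (n : ℂ) * (t : ℂ))‖ :=
        norm_sum_le _ _
    _ = ∑ n ∈ Finset.Icc (-(N : ℤ)) (N : ℤ), 1 := by
        apply Finset.sum_congr rfl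
        intro n _
        simp [Complex.norm_exp, Complex.mul_re, Complex.mul_im]
    _ = ((Finset.Icc (-(N : ℤ)) (N : ℤ)).card : ℝ) := by simp
    _ ≤ 2 * N + 1 := by
        rw [Int.card_Icc]
        have hc : ((N:ℤ) + 1 - -(N:ℤ)).toNat = 2 * N + 1 := by omega
        rw [hc]
        push_cast
        linarith


lemma measurable_hilbertKernel : Measurable hilbertKernel := by
  unfold hilbertKernel
  apply Measurable.ite
  · exact (measurableSet_lt measurable_const measurable_abs).inter
      (measurableSet_lt measurable_abs measurable_const)
  · apply Measurable.div
    · exact measurable_const.sub (Complex.measurable_ofReal.comp measurable_abs)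
    · exact (Complex.continuous_exp.comp (continuous_const.mul Complex.continuous_ofReal)).measurable
        |>.const_sub 1
  · exact measurable_const

lemma hilbertKernel_eq_zero {t : ℝ} (h : 1 ≤ |t|) : hilbertKernel t = 0 := by
  unfold hilbertKernel
  rw [if_neg]
  rintro ⟨-, h2⟩
  linarith

lemma denom_pos {t : ℝ} (h0 : t ≠ 0) (hπ : |t| ≤ π) :
    0 < ‖1 - Complex.exp (Complex.I * t)‖ := by
  have := norm_one_sub_exp_ge hπ
  have h1 : 0 < |t| := abs_pos.mpr h0
  exact lt_of_lt_of_le (by positivity) this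

lemma norm_hilbertKernel_le {t : ℝ} (h0 : t ≠ 0) (hπ : |t| ≤ π) :
    ‖hilbertKernel t‖ ≤ π / (2 * |t|) := by
  have hπ0 := Real.pi_pos
  have h1 : 0 < |t| := abs_pos.mpr h0
  unfold hilbertKernel
  split_ifs with h
  · rw [norm_div]
    have hnum : ‖(1 : ℂ) - (|t| : ℝ)‖ ≤ 1 := by
      rw [show ((1 : ℂ) - (|t| : ℝ)) = ((1 - |t| : ℝ) : ℂ) by push_cast; ring]
      simp only [Complex.norm_real, Real.norm_eq_abs]
      rw [_root_.abs_of_nonneg (by linarith [h.2])]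
      linarith [h.1]
    have hden := norm_one_sub_exp_ge hπ
    have hden0 := denom_pos h0 hπ
    calc ‖(1 : ℂ) - (|t| : ℝ)‖ / ‖1 - Complex.exp (Complex.I * t)‖
        ≤ 1 / (2 / π * |t|) := by
          apply div_le_div₀ (by positivity) hnum (by positivity) hden
      _ = π / (2 * |t|) := by field_simp
  · simp; positivity

lemma err_bound {t : ℝ} (h0 : t ≠ 0) (hπ : |t| ≤ π) :
    ‖(1 - Complex.exp (Complex.I * t))⁻¹ - hilbertKernel t‖ ≤ π / 2 := by
  have hπ0 := Real.pi_pos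
  have h1 : 0 < |t| := abs_pos.mpr h0
  have hden := norm_one_sub_exp_ge hπ
  have hden0 := denom_pos h0 hπ
  have hdenne : (1 : ℂ) - Complex.exp (Complex.I * t) ≠ 0 := by
    intro h; rw [h] at hden0; simp at hden0
  unfold hilbertKernel
  split_ifs with h
  · have heq : (1 - Complex.exp (Complex.I * t))⁻¹
        - ((1 : ℂ) - (|t| : ℝ)) / (1 - Complex.exp (Complex.I * t))
        = ((|t| : ℝ) : ℂ) / (1 - Complex.exp (Complex.I * t)) := by
      field_simp; ring
    rw [heq, norm_div]
    simp only [Complex.norm_real, Real.norm_eq_abs, _root_.abs_abs]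
    calc |t| / ‖1 - Complex.exp (Complex.I * t)‖ ≤ |t| / (2 / π * |t|) := by
          apply div_le_div_of_nonneg_left h1.le (by positivity) hden
      _ = π / 2 := by field_simp
  · rw [sub_zero, norm_inv]
    have hone : 1 ≤ |t| := by
      rcases not_and_or.mp h with h' | h'
      · exact absurd h1 h'
      · linarith [not_lt.mp h']
    calc ‖1 - Complex.exp (Complex.I * t)‖⁻¹ ≤ (2 / π * |t|)⁻¹ := by
          apply inv_anti₀ (by positivity) hden
      _ = π / (2 * |t|) := by field_simp
      _ ≤ π / 2 := by
          apply div_le_div_of_nonneg_left hπ0.le (by norm_num) (by linarith)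

lemma conj_err (t : ℝ) :
    (1 - Complex.exp (-(Complex.I * t)))⁻¹ - (starRingEnd ℂ) (hilbertKernel t)
      = (starRingEnd ℂ) ((1 - Complex.exp (Complex.I * t))⁻¹ - hilbertKernel t) := by
  rw [map_sub, map_inv₀, map_sub, ← Complex.exp_conj]
  simp [Complex.conj_I]

lemma exp_I_ne_one {t : ℝ} (h0 : t ≠ 0) (hπ : |t| ≤ π) :
    Complex.exp (Complex.I * t) ≠ 1 := by
  intro h
  rw [Complex.exp_eq_one_iff] at h
  obtain ⟨n, hn⟩ := h
  have hn' : Complex.I * t = Complex.I * (n * (2 * π)) := by rw [hn]; ring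
  have ht : (t : ℂ) = ((n * (2 * π) : ℝ) : ℂ) := by
    have := mul_left_cancel₀ Complex.I_ne_zero hn'
    push_cast
    exact this
  have ht' : t = n * (2 * π) := by exact_mod_cast ht
  have hπ0 := Real.pi_pos
  rcases lt_trichotomy (n : ℝ) 0 with h' | h' | h'
  · have : (n : ℝ) ≤ -1 := by exact_mod_cast Int.le_of_lt_add_one (by exact_mod_cast h')
    rw [ht'] at hπ
    rw [_root_.abs_of_nonpos (by nlinarith)] at hπ
    nlinarith
  · exact h0 (by rw [ht', h']; ring)
  · have : (1 : ℝ) ≤ (n : ℝ) := by exact_mod_cast h'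
    rw [ht'] at hπ
    rw [_root_.abs_of_nonneg (by nlinarith)] at hπ
    nlinarith

lemma integrableOn_bdd {f : ℝ → ℂ} {s : Set ℝ}
    (hf : AEStronglyMeasurable f (volume.restrict s)) (hs : MeasurableSet s)
    (hsf : volume s < ⊤) {C : ℝ} (hC : ∀ y ∈ s, ‖f y‖ ≤ C) : IntegrableOn f s := by
  apply Integrable.mono' (integrableOn_const hsf.ne) hf
  rw [ae_restrict_iff' hs]
  exact ae_of_all _ hC

lemma dirK_periodic (N : ℕ) : Function.Periodic (dirK N) (2 * π) := by
  intro t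
  unfold dirK
  apply Finset.sum_congr rfl
  intro n _
  push_cast
  rw [show (Complex.I * n * ((t : ℂ) + 2 * π))
      = Complex.I * n * t + n * (2 * π * Complex.I) by push_cast; ring]
  rw [Complex.exp_add, Complex.exp_int_mul_two_pi_mul_I, mul_one]


lemma fourier_conv {g : ℝ → ℂ} (hg : Measurable g) {δ : ℝ} (hgb : ∀ y, ‖g y‖ ≤ δ)
    (hper : Function.Periodic g (2 * π)) (N : ℕ) (x : ℝ) :
    partialFourierSum N g x
      = (((2 * π)⁻¹ : ℝ) : ℂ) * ∫ y in Set.Ioo (x - π) (x + π), g y * dirK N (x - y) := by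
  have hπ0 := Real.pi_pos
  have hint : ∀ n : ℤ, ∀ a b : ℝ, IntervalIntegrable
      (fun y => g y * Complex.exp (Complex.I * (n : ℂ) * ((x - y : ℝ) : ℂ))) volume a b := by
    intro n a b
    rw [intervalIntegrable_iff]
    apply integrableOn_bdd (C := δ)
    · apply Measurable.aestronglyMeasurable
      apply hg.mul
      exact (Complex.continuous_exp.comp ((continuous_const.mul
        (Complex.continuous_ofReal.comp (continuous_const.sub continuous_id))))).measurable
    · exact measurableSet_uIoc
    · exact measure_Ioc_lt_top
    · intro y _
      rw [norm_mul]
      simp only [Complex.norm_exp]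
      have h0 : (Complex.I * (n : ℂ) * ((x - y : ℝ) : ℂ)).re = 0 := by
        simp [Complex.mul_re, Complex.mul_im]
      rw [h0]
      simpa using hgb y
  have e1 : ∀ n : ℤ,
      ((((2 * π)⁻¹ : ℝ) : ℂ) *
        ∫ y in (0 : ℝ)..(2 * π), g y * Complex.exp (-(Complex.I * (n : ℂ) * (y : ℂ)))) *
          Complex.exp (Complex.I * (n : ℂ) * (x : ℂ))
      = (((2 * π)⁻¹ : ℝ) : ℂ) *
          ∫ y in (0 : ℝ)..(2 * π), g y * Complex.exp (Complex.I * (n : ℂ) * ((x - y : ℝ) : ℂ)) := by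
    intro n
    have key : (∫ y in (0 : ℝ)..(2 * π), g y * Complex.exp (Complex.I * (n : ℂ) * ((x - y : ℝ) : ℂ)))
        = (∫ y in (0 : ℝ)..(2 * π), g y * Complex.exp (-(Complex.I * (n : ℂ) * (y : ℂ))))
            * Complex.exp (Complex.I * (n : ℂ) * (x : ℂ)) := by
      rw [← intervalIntegral.integral_mul_const]
      apply intervalIntegral.integral_congr
      intro y _
      show g y * Complex.exp (Complex.I * (n : ℂ) * ((x - y : ℝ) : ℂ))
        = g y * Complex.exp (-(Complex.I * (n : ℂ) * (y : ℂ)))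
            * Complex.exp (Complex.I * (n : ℂ) * (x : ℂ))
      rw [mul_assoc (g y), ← Complex.exp_add]
      congr 2
      push_cast
      ring
    rw [key]
    ring
  have e2 : partialFourierSum N g x
      = (((2 * π)⁻¹ : ℝ) : ℂ) *
          ∫ y in (0 : ℝ)..(2 * π), g y * dirK N (x - y) := by
    unfold partialFourierSum
    rw [Finset.sum_congr rfl fun n _ => e1 n, ← Finset.mul_sum]
    congr 1
    rw [← intervalIntegral.integral_finset_sum fun n _ => hint n 0 (2 * π)]
    apply intervalIntegral.integral_congr
    intro y _
    show (∑ n ∈ Finset.Icc (-(N : ℤ)) (N : ℤ),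
        g y * Complex.exp (Complex.I * (n : ℂ) * ((x - y : ℝ) : ℂ)))
      = g y * dirK N (x - y)
    unfold dirK
    rw [Finset.mul_sum]
  rw [e2]
  congr 1
  have hper2 : Function.Periodic (fun y => g y * dirK N (x - y)) (2 * π) := by
    intro y
    simp only
    rw [hper y, show x - (y + 2 * π) = (x - y) - (2 * π) by ring,
      (dirK_periodic N).sub_eq (x - y)]
  have hshift := hper2.intervalIntegral_add_eq 0 (x - π)
  rw [zero_add, show x - π + 2 * π = x + π by ring] at hshift
  rw [hshift, intervalIntegral.integral_of_le (by linarith),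
    MeasureTheory.integral_Ioc_eq_integral_Ioo]


lemma le_carleson (f : ℝ → ℂ) (x : ℝ) (n : ℤ) {r : ℝ} (hr : 0 < r) :
    (‖∫ y in {y : ℝ | r < |x - y| ∧ |x - y| < 1},
        f y * hilbertKernel (x - y) * Complex.exp (Complex.I * (n : ℂ) * (y : ℂ))‖₊ : ℝ≥0∞)
      ≤ carlesonOperatorReal f x :=
  le_iSup_of_le n (le_iSup_of_le r (le_iSup_of_le hr le_rfl))

/-- **Partial Fourier sum bound**: if `g` is measurable, `2π`-periodic and `|g| ≤ δ`, then for
`x ∈ [0, 2π]` and `N > 0`, `|S_N g(x)| ≤ (1/2π)(T g(x) + T ḡ(x)) + π δ`. -/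
theorem partialFourierSum_bound {δ : ℝ} (hδ : 0 < δ) {g : ℝ → ℂ} (hg_meas : Measurable g)
    (periodic_g : Function.Periodic g (2 * π)) (hg_bdd : ∀ x, ‖g x‖ ≤ δ)
    {N : ℕ} (hN : 0 < N) {x : ℝ} (hx : x ∈ Set.Icc 0 (2 * π)) :
    (‖partialFourierSum N g x‖₊ : ℝ≥0∞) ≤
      (ENNReal.ofReal (2 * π))⁻¹ *
          (carlesonOperatorReal g x +
            carlesonOperatorReal (fun y => (starRingEnd ℂ) (g y)) x) +
        ENNReal.ofReal (π * δ) := by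
  classical
  have hπ0 := Real.pi_pos
  have h2π : (0:ℝ) < 2 * π := by linarith
  have h1π : (1:ℝ) < π := by nlinarith [Real.pi_gt_three]
  set Tg := carlesonOperatorReal g x with hTgdef
  set Tg' := carlesonOperatorReal (fun y => (starRingEnd ℂ) (g y)) x with hTg'def
  by_cases htop : Tg = ⊤ ∨ Tg' = ⊤
  · have h2 : (ENNReal.ofReal (2 * π))⁻¹ ≠ 0 := by
      exact ENNReal.inv_ne_zero.mpr ENNReal.ofReal_ne_top
    have h3 : Tg + Tg' = ⊤ := by
      rcases htop with h | h <;> simp [h]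
    rw [h3, ENNReal.mul_top h2, top_add]
    exact le_top
  push_neg at htop
  obtain ⟨hTgt, hTg't⟩ := htop
  have hmabs : Measurable fun y : ℝ => |x - y| :=
    (measurable_const.sub measurable_id).abs
  have hdirKcont : Continuous (dirK N) := by
    unfold dirK
    refine continuous_finset_sum _ fun n _ => ?_
    exact Complex.continuous_exp.comp (continuous_const.mul Complex.continuous_ofReal)
  have hnormexp : ∀ z : ℂ, z.re = 0 → ‖Complex.exp z‖ = 1 := fun z hz => by
    simp [Complex.norm_exp, hz]
  have hexpm : ∀ y : ℝ, ‖Complex.exp (-(Complex.I * (N:ℂ) * y))‖ = 1 := fun y =>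
    hnormexp _ (by simp [Complex.mul_re, Complex.mul_im])
  have hexpp : ∀ y : ℝ, ‖Complex.exp (Complex.I * (N:ℂ) * y)‖ = 1 := fun y =>
    hnormexp _ (by simp [Complex.mul_re, Complex.mul_im])
  have hf0bound : ∀ y : ℝ, ‖g y * dirK N (x - y)‖ ≤ δ * (2*N+1) := by
    intro y
    rw [norm_mul]
    exact mul_le_mul (hg_bdd y) (norm_dirK_le N (x - y)) (norm_nonneg _) hδ.le
  have hf0m : Measurable fun y : ℝ => g y * dirK N (x - y) :=
    hg_meas.mul (hdirKcont.measurable.comp (measurable_const.sub measurable_id))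
  have key : ∀ r : ℝ, 0 < r → r < 1 →
      ‖partialFourierSum N g x‖
        ≤ (2*π)⁻¹ * (Tg.toReal + Tg'.toReal) + π * δ + δ * (2*(N:ℝ)+1) / π * r := by
    intro r hr hr1
    rw [fourier_conv hg_meas hg_bdd periodic_g N x]
    set B := Set.Ioo (x - π) (x + π) with hBdef
    set S2 := {y : ℝ | r < |x - y| ∧ |x - y| < π} with hS2def
    set S1 := {y : ℝ | r < |x - y| ∧ |x - y| < 1} with hS1def
    have hS2eq : S2 = B \ Metric.closedBall x r := by
      ext y
      simp only [hS2def, hBdef, Set.mem_setOf_eq, Set.mem_diff, Set.mem_Ioo,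
        Metric.mem_closedBall, Real.dist_eq, not_le]
      constructor
      · rintro ⟨h1, h2⟩
        have h3 := abs_lt.mp h2
        refine ⟨⟨by linarith [h3.2], by linarith [h3.1]⟩, ?_⟩
        rw [abs_sub_comm] at h1
        exact h1
      · rintro ⟨⟨h1, h2⟩, h3⟩
        rw [abs_sub_comm] at h3
        exact ⟨h3, abs_lt.mpr ⟨by linarith, by linarith⟩⟩
    have hS2m : MeasurableSet S2 :=
      (measurableSet_lt measurable_const hmabs).inter (measurableSet_lt hmabs measurable_const)
    have hS1m : MeasurableSet S1 :=
      (measurableSet_lt measurable_const hmabs).inter (measurableSet_lt hmabs measurable_const)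
    have hvolB : volume B = ENNReal.ofReal (2*π) := by
      rw [hBdef, Real.volume_Ioo]; congr 1; ring
    have hvolBlt : volume B < ⊤ := by rw [hvolB]; exact ENNReal.ofReal_lt_top
    have hS2sub : S2 ⊆ B := by rw [hS2eq]; exact Set.diff_subset
    have hvolS2 : volume S2 < ⊤ := lt_of_le_of_lt (measure_mono hS2sub) hvolBlt
    have hvolS2' : (volume S2).toReal ≤ 2*π := by
      calc (volume S2).toReal ≤ (ENNReal.ofReal (2*π)).toReal :=
            ENNReal.toReal_mono ENNReal.ofReal_ne_top (hvolB ▸ measure_mono hS2sub)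
        _ = 2*π := ENNReal.toReal_ofReal h2π.le
    have hS1sub2 : S1 ⊆ S2 := fun y hy => ⟨hy.1, lt_trans hy.2 h1π⟩
    have hCBsub : Metric.closedBall x r ⊆ B := by
      intro y hy
      rw [Metric.mem_closedBall, Real.dist_eq] at hy
      have h4 := abs_le.mp hy
      exact ⟨by linarith [h4.1], by linarith [h4.2]⟩
    have hy0 : ∀ y ∈ S2, x - y ≠ 0 := fun y hy => abs_pos.mp (hr.trans hy.1)
    have hyπ : ∀ y ∈ S2, |x - y| ≤ π := fun y hy => hy.2.le
    set cA := Complex.exp (Complex.I * (N:ℂ) * x) with hcAdef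
    set cB := Complex.exp (-(Complex.I * (N:ℂ) * x)) with hcBdef
    have hcA : ‖cA‖ = 1 := hnormexp _ (by simp [Complex.mul_re, Complex.mul_im])
    have hcB : ‖cB‖ = 1 := hnormexp _ (by simp [Complex.mul_re, Complex.mul_im])
    -- the four integrands on S2
    set P1 := fun y : ℝ => g y * Complex.exp (-(Complex.I * (N:ℂ) * y)) *
        (starRingEnd ℂ) (hilbertKernel (x - y)) with hP1def
    set P2 := fun y : ℝ => g y * Complex.exp (-(Complex.I * (N:ℂ) * y)) *
        ((1 - Complex.exp (-(Complex.I * ((x - y : ℝ) : ℂ))))⁻¹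
          - (starRingEnd ℂ) (hilbertKernel (x - y))) with hP2def
    set P3 := fun y : ℝ => g y * Complex.exp (Complex.I * (N:ℂ) * y) *
        hilbertKernel (x - y) with hP3def
    set P4 := fun y : ℝ => g y * Complex.exp (Complex.I * (N:ℂ) * y) *
        ((1 - Complex.exp (Complex.I * ((x - y : ℝ) : ℂ)))⁻¹
          - hilbertKernel (x - y)) with hP4def
    -- measurability
    have hexpmm : Measurable fun y : ℝ => Complex.exp (-(Complex.I * (N:ℂ) * y)) :=
      (Complex.continuous_exp.comp (continuous_const.mul Complex.continuous_ofReal).neg).measurable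
    have hexppm : Measurable fun y : ℝ => Complex.exp (Complex.I * (N:ℂ) * y) :=
      (Complex.continuous_exp.comp (continuous_const.mul Complex.continuous_ofReal)).measurable
    have hκxm : Measurable fun y : ℝ => hilbertKernel (x - y) :=
      measurable_hilbertKernel.comp (measurable_const.sub measurable_id)
    have hκxcm : Measurable fun y : ℝ => (starRingEnd ℂ) (hilbertKernel (x - y)) :=
      continuous_star.measurable.comp hκxm
    have hinvpm : Measurable fun y : ℝ =>
        (1 - Complex.exp (Complex.I * ((x - y : ℝ) : ℂ)))⁻¹ :=
      ((measurable_const.sub (Complex.continuous_exp.comp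
        (continuous_const.mul (Complex.continuous_ofReal.comp
          (continuous_const.sub continuous_id)))).measurable)).inv
    have hinvmm : Measurable fun y : ℝ =>
        (1 - Complex.exp (-(Complex.I * ((x - y : ℝ) : ℂ))))⁻¹ :=
      ((measurable_const.sub (Complex.continuous_exp.comp
        (continuous_const.mul (Complex.continuous_ofReal.comp
          (continuous_const.sub continuous_id))).neg).measurable)).inv
    have hP1m : Measurable P1 := (hg_meas.mul hexpmm).mul hκxcm
    have hP2m : Measurable P2 := (hg_meas.mul hexpmm).mul (hinvmm.sub hκxcm)
    have hP3m : Measurable P3 := (hg_meas.mul hexppm).mul hκxm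
    have hP4m : Measurable P4 := (hg_meas.mul hexppm).mul (hinvpm.sub hκxm)
    -- pointwise bounds on S2
    have hP1b : ∀ y ∈ S2, ‖P1 y‖ ≤ δ * (π/(2*r)) := by
      intro y hy
      rw [hP1def]
      simp only
      rw [norm_mul, norm_mul, hexpm y, mul_one, RCLike.norm_conj]
      apply mul_le_mul (hg_bdd y) ?_ (norm_nonneg _) hδ.le
      calc ‖hilbertKernel (x - y)‖ ≤ π / (2 * |x - y|) :=
            norm_hilbertKernel_le (hy0 y hy) (hyπ y hy)
        _ ≤ π / (2 * r) := by gcongr; exact hy.1.le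
    have hP2b : ∀ y ∈ S2, ‖P2 y‖ ≤ δ * (π/2) := by
      intro y hy
      rw [hP2def]
      simp only
      rw [norm_mul, norm_mul, hexpm y, mul_one, conj_err (x - y), RCLike.norm_conj]
      exact mul_le_mul (hg_bdd y) (err_bound (hy0 y hy) (hyπ y hy)) (norm_nonneg _) hδ.le
    have hP3b : ∀ y ∈ S2, ‖P3 y‖ ≤ δ * (π/(2*r)) := by
      intro y hy
      rw [hP3def]
      simp only
      rw [norm_mul, norm_mul, hexpp y, mul_one]
      apply mul_le_mul (hg_bdd y) ?_ (norm_nonneg _) hδ.le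
      calc ‖hilbertKernel (x - y)‖ ≤ π / (2 * |x - y|) :=
            norm_hilbertKernel_le (hy0 y hy) (hyπ y hy)
        _ ≤ π / (2 * r) := by gcongr; exact hy.1.le
    have hP4b : ∀ y ∈ S2, ‖P4 y‖ ≤ δ * (π/2) := by
      intro y hy
      rw [hP4def]
      simp only
      rw [norm_mul, norm_mul, hexpp y, mul_one]
      exact mul_le_mul (hg_bdd y) (err_bound (hy0 y hy) (hyπ y hy)) (norm_nonneg _) hδ.le
    -- integrability
    have hintf0B : IntegrableOn (fun y => g y * dirK N (x - y)) B :=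
      integrableOn_bdd hf0m.aestronglyMeasurable measurableSet_Ioo hvolBlt
        (fun y _ => hf0bound y)
    have hintP1 : IntegrableOn P1 S2 :=
      integrableOn_bdd hP1m.aestronglyMeasurable hS2m hvolS2 hP1b
    have hintP2 : IntegrableOn P2 S2 :=
      integrableOn_bdd hP2m.aestronglyMeasurable hS2m hvolS2 hP2b
    have hintP3 : IntegrableOn P3 S2 :=
      integrableOn_bdd hP3m.aestronglyMeasurable hS2m hvolS2 hP3b
    have hintP4 : IntegrableOn P4 S2 :=
      integrableOn_bdd hP4m.aestronglyMeasurable hS2m hvolS2 hP4b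
    -- splitting off the small ball
    have hsplit1 : (∫ y in B, g y * dirK N (x - y))
        = (∫ y in Metric.closedBall x r, g y * dirK N (x - y))
          + ∫ y in S2, g y * dirK N (x - y) := by
      rw [hS2eq, MeasureTheory.integral_diff measurableSet_closedBall hintf0B hCBsub]
      ring
    -- pointwise kernel decomposition on S2
    have hpt : ∀ y ∈ S2, g y * dirK N (x - y) = cA * (P1 y + P2 y) + cB * (P3 y + P4 y) := by
      intro y hy
      rw [dirK_eq (exp_I_ne_one (hy0 y hy) (hyπ y hy))]
      have e1 : Complex.exp (Complex.I * (N:ℂ) * ((x - y : ℝ):ℂ))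
          = cA * Complex.exp (-(Complex.I * (N:ℂ) * y)) := by
        rw [hcAdef, ← Complex.exp_add]; congr 1; push_cast; ring
      have e2 : Complex.exp (-(Complex.I * (N:ℂ) * ((x - y : ℝ):ℂ)))
          = cB * Complex.exp (Complex.I * (N:ℂ) * y) := by
        rw [hcBdef, ← Complex.exp_add]; congr 1; push_cast; ring
      rw [div_eq_mul_inv, div_eq_mul_inv, e1, e2, hP1def, hP2def, hP3def, hP4def]
      simp only
      ring
    -- integral decomposition on S2
    have hS2int : (∫ y in S2, g y * dirK N (x - y))
        = cA * ((∫ y in S2, P1 y) + ∫ y in S2, P2 y)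
          + cB * ((∫ y in S2, P3 y) + ∫ y in S2, P4 y) := by
      have h12 : IntegrableOn (fun y => cA * (P1 y + P2 y)) S2 := by
        exact (hintP1.add hintP2).const_mul cA
      have h34 : IntegrableOn (fun y => cB * (P3 y + P4 y)) S2 := by
        exact (hintP3.add hintP4).const_mul cB
      rw [setIntegral_congr_fun hS2m (fun y hy => hpt y hy)]
      rw [integral_add h12 h34, integral_const_mul, integral_const_mul,
        integral_add hintP1 hintP2, integral_add hintP3 hintP4]
    -- localization of the kernel integrals to S1
    have hloc : ∀ (P : ℝ → ℂ), IntegrableOn P S2 → (∀ y ∈ S2 \ S1, P y = 0) →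
        (∫ y in S2, P y) = ∫ y in S1, P y := by
      intro P hint hvanish
      rw [show S2 = S1 ∪ (S2 \ S1) from (Set.union_diff_cancel hS1sub2).symm,
        setIntegral_union Set.disjoint_sdiff_right (hS2m.diff hS1m)
          (hint.mono_set hS1sub2) (hint.mono_set Set.diff_subset),
        setIntegral_eq_zero_of_forall_eq_zero hvanish, add_zero]
    have hκ0 : ∀ y ∈ S2 \ S1, hilbertKernel (x - y) = 0 := by
      rintro y ⟨hy2, hy1⟩
      apply hilbertKernel_eq_zero
      by_contra hcon
      exact hy1 ⟨hy2.1, lt_of_not_ge hcon⟩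
    have hP1S1 : (∫ y in S2, P1 y) = ∫ y in S1, P1 y :=
      hloc P1 hintP1 (fun y hy => by rw [hP1def]; simp only; rw [hκ0 y hy]; simp)
    have hP3S1 : (∫ y in S2, P3 y) = ∫ y in S1, P3 y :=
      hloc P3 hintP3 (fun y hy => by rw [hP3def]; simp only; rw [hκ0 y hy]; simp)
    -- conjugation identity for P1
    have hconjexp : ∀ y : ℝ, (starRingEnd ℂ) (Complex.exp (Complex.I * (N:ℂ) * y))
        = Complex.exp (-(Complex.I * (N:ℂ) * y)) := by
      intro y
      rw [← Complex.exp_conj]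
      congr 1
      simp [Complex.conj_I]
    have hconjint : (∫ y in S1, P1 y)
        = (starRingEnd ℂ) (∫ y in S1, (starRingEnd ℂ) (g y) * hilbertKernel (x - y)
            * Complex.exp (Complex.I * (N:ℂ) * y)) := by
      rw [← integral_conj]
      apply setIntegral_congr_fun hS1m
      intro y _
      rw [hP1def]
      simp only [map_mul, Complex.conj_conj, hconjexp y]
      ring
    have hP3form : (∫ y in S1, P3 y)
        = ∫ y in S1, g y * hilbertKernel (x - y) * Complex.exp (Complex.I * (N:ℂ) * y) := by
      apply setIntegral_congr_fun hS1m
      intro y _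
      rw [hP3def]
      simp only
      ring
    -- Carleson operator bounds
    have hcast : ∀ (f : ℝ → ℂ),
        (∫ y in S1, f y * hilbertKernel (x - y) * Complex.exp (Complex.I * (((N:ℤ)):ℂ) * y))
          = ∫ y in S1, f y * hilbertKernel (x - y) * Complex.exp (Complex.I * ((N:ℕ):ℂ) * y) := by
      intro f
      norm_num
    have hbound1 : ‖∫ y in S1, (starRingEnd ℂ) (g y) * hilbertKernel (x - y)
        * Complex.exp (Complex.I * (N:ℂ) * y)‖ ≤ Tg'.toReal := by
      have hle := le_carleson (fun y => (starRingEnd ℂ) (g y)) x (N:ℤ) hr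
      rw [← hS1def] at hle
      rw [hcast] at hle
      rw [← hTg'def] at hle
      have h5 := ENNReal.toReal_mono hTg't hle
      simpa using h5
    have hbound3 : ‖∫ y in S1, g y * hilbertKernel (x - y)
        * Complex.exp (Complex.I * (N:ℂ) * y)‖ ≤ Tg.toReal := by
      have hle := le_carleson g x (N:ℤ) hr
      rw [← hS1def] at hle
      rw [hcast] at hle
      rw [← hTgdef] at hle
      have h5 := ENNReal.toReal_mono hTgt hle
      simpa using h5
    -- error integral bounds
    have herr2 : ‖∫ y in S2, P2 y‖ ≤ δ * (π/2) * (2*π) := by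
      calc ‖∫ y in S2, P2 y‖ ≤ δ * (π/2) * (volume S2).toReal :=
            norm_setIntegral_le_of_norm_le_const hvolS2 hP2b
        _ ≤ δ * (π/2) * (2*π) := by
            apply mul_le_mul_of_nonneg_left hvolS2' (by positivity)
    have herr4 : ‖∫ y in S2, P4 y‖ ≤ δ * (π/2) * (2*π) := by
      calc ‖∫ y in S2, P4 y‖ ≤ δ * (π/2) * (volume S2).toReal :=
            norm_setIntegral_le_of_norm_le_const hvolS2 hP4b
        _ ≤ δ * (π/2) * (2*π) := by
            apply mul_le_mul_of_nonneg_left hvolS2' (by positivity)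
    -- small ball bound
    have hsmall : ‖∫ y in Metric.closedBall x r, g y * dirK N (x - y)‖
        ≤ δ * (2*N+1) * (2*r) := by
      calc ‖∫ y in Metric.closedBall x r, g y * dirK N (x - y)‖
          ≤ δ * (2*N+1) * (volume (Metric.closedBall x r)).toReal :=
            norm_setIntegral_le_of_norm_le_const
              (by rw [Real.volume_closedBall]; exact ENNReal.ofReal_lt_top)
              (fun y _ => hf0bound y)
        _ = δ * (2*N+1) * (2*r) := by
            rw [Real.volume_closedBall, ENNReal.toReal_ofReal (by linarith)]
    -- total bound
    have htotal : ‖∫ y in B, g y * dirK N (x - y)‖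
        ≤ δ * (2*N+1) * (2*r) + (Tg'.toReal + δ * (π/2) * (2*π))
          + (Tg.toReal + δ * (π/2) * (2*π)) := by
      rw [hsplit1, hS2int, hP1S1, hP3S1, hconjint, hP3form]
      refine le_trans (norm_add_le _ _) ?_
      refine le_trans (add_le_add le_rfl (norm_add_le _ _)) ?_
      rw [norm_mul, norm_mul, hcA, hcB, one_mul, one_mul]
      have n1 : ‖(starRingEnd ℂ) (∫ y in S1, (starRingEnd ℂ) (g y) * hilbertKernel (x - y)
            * Complex.exp (Complex.I * (N:ℂ) * y)) + ∫ y in S2, P2 y‖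
          ≤ Tg'.toReal + δ * (π/2) * (2*π) :=
        le_trans (norm_add_le _ _)
          (add_le_add (by rw [RCLike.norm_conj]; exact hbound1) herr2)
      have n3 : ‖(∫ y in S1, g y * hilbertKernel (x - y)
            * Complex.exp (Complex.I * (N:ℂ) * y)) + ∫ y in S2, P4 y‖
          ≤ Tg.toReal + δ * (π/2) * (2*π) :=
        le_trans (norm_add_le _ _) (add_le_add hbound3 herr4)
      linarith [hsmall]
    rw [norm_mul]
    have hc : ‖(((2*π)⁻¹ : ℝ) : ℂ)‖ = (2*π)⁻¹ := by
      simp only [Complex.norm_real, Real.norm_eq_abs]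
      exact _root_.abs_of_nonneg (by positivity)
    rw [hc]
    calc (2*π)⁻¹ * ‖∫ y in B, g y * dirK N (x - y)‖
        ≤ (2*π)⁻¹ * (δ * (2*N+1) * (2*r) + (Tg'.toReal + δ * (π/2) * (2*π))
            + (Tg.toReal + δ * (π/2) * (2*π))) := by
          apply mul_le_mul_of_nonneg_left htotal (by positivity)
      _ = (2*π)⁻¹ * (Tg.toReal + Tg'.toReal) + π * δ + δ * (2*(N:ℝ)+1) / π * r := by
          field_simp
          ring
  -- pass to the limit r → 0
  have hfinal : ‖partialFourierSum N g x‖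
      ≤ (2*π)⁻¹ * (Tg.toReal + Tg'.toReal) + π * δ := by
    apply le_of_forall_pos_le_add
    intro ε hε
    set k := δ * (2*(N:ℝ)+1) / π with hkdef
    have hkpos : 0 < k := by
      rw [hkdef]; positivity
    set r := min (1/2) (ε / (2*k)) with hrdef
    have hrpos : 0 < r := lt_min (by norm_num) (by positivity)
    have hrlt1 : r < 1 := lt_of_le_of_lt (min_le_left _ _) (by norm_num)
    have hkey := key r hrpos hrlt1
    have hterm : k * r ≤ ε / 2 := by
      calc k * r ≤ k * (ε/(2*k)) := mul_le_mul_of_nonneg_left (min_le_right _ _) hkpos.le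
        _ = ε / 2 := by field_simp
    have hk2 : δ * (2*(N:ℝ)+1) / π * r = k * r := by rw [hkdef]
    rw [hk2] at hkey
    linarith
  rw [show (‖partialFourierSum N g x‖₊ : ℝ≥0∞) = ENNReal.ofReal ‖partialFourierSum N g x‖ from (ofReal_norm _).symm]
  calc ENNReal.ofReal ‖partialFourierSum N g x‖
      ≤ ENNReal.ofReal ((2*π)⁻¹ * (Tg.toReal + Tg'.toReal) + π * δ) :=
        ENNReal.ofReal_le_ofReal hfinal
    _ ≤ (ENNReal.ofReal (2 * π))⁻¹ * (Tg + Tg') + ENNReal.ofReal (π * δ) := by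
        rw [ENNReal.ofReal_add (by positivity) (by positivity)]
        apply add_le_add ?_ le_rfl
        rw [ENNReal.ofReal_mul (by positivity), ENNReal.ofReal_inv_of_pos h2π]
        apply mul_le_mul_right
        rw [ENNReal.ofReal_add ENNReal.toReal_nonneg ENNReal.toReal_nonneg]
        exact add_le_add ENNReal.ofReal_toReal_le ENNReal.ofReal_toReal_le
end

section
/- Let (X,ρ,μ,a) be a doubling metric measure space. Let 𝔅 be a finite collection of open balls in X, λ > 0, and u: X → [0,∞) a measurable function such that ∫_B u dμ ≥ λ μ(B) for every B ∈ 𝔅. Then λ μ(⋃𝔅) ≤ 2^{2a} ∫_X u dμ. -/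
open MeasureTheory Metric
open scoped ENNReal

/-- **Vitali covering / ball covering inequality** in a doubling metric measure space
`(X, ρ, μ, a)`: if `𝔅` is a finite collection of balls such that
`∫_B u dμ ≥ λ μ(B)` for each `B ∈ 𝔅`, then `λ μ(⋃ 𝔅) ≤ 2^{2a} ∫_X u dμ`. -/
theorem finset_measure_biUnion_le_lintegral
    {X : Type*} [MetricSpace X] [CompleteSpace X] [LocallyCompactSpace X]
    [MeasurableSpace X] [BorelSpace X]
    (μ : Measure X) [IsLocallyFiniteMeasure μ] (hμ : μ ≠ 0)
    {a : ℕ} (ha : 1 ≤ a)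
    (doubling : ∀ (x : X) (R : ℝ), 0 < R → μ (ball x (2 * R)) ≤ 2 ^ a * μ (ball x R))
    {ι : Type*} (𝔅 : Finset ι) (c : ι → X) (r : ι → ℝ) (hr : ∀ i ∈ 𝔅, 0 < r i)
    {l : ℝ} (hl : 0 < l) {u : X → ℝ≥0∞} (hu : Measurable u)
    (h : ∀ i ∈ 𝔅, ENNReal.ofReal l * μ (ball (c i) (r i)) ≤
      ∫⁻ x in ball (c i) (r i), u x ∂μ) :
    ENNReal.ofReal l * μ (⋃ i ∈ 𝔅, ball (c i) (r i)) ≤ 2 ^ (2 * a) * ∫⁻ x, u x ∂μ := by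
  rcases 𝔅.eq_empty_or_nonempty with rfl | hne
  · simp
  set R : ℝ := 𝔅.sup' hne r with hR
  obtain ⟨v, hv𝔅, hvdisj, hvcov⟩ := Vitali.exists_disjoint_subfamily_covering_enlargement
    (fun i => ball (c i) (r i)) (↑𝔅) r (3/2) (by norm_num)
    (fun i hi => (hr i hi).le) R (fun i hi => 𝔅.le_sup' r hi)
    (fun i hi => nonempty_ball.2 (hr i hi))
  have hvfin : v.Finite := (𝔅.finite_toSet.subset hv𝔅)
  set w : Finset ι := hvfin.toFinset with hw
  have hw𝔅 : ∀ i ∈ w, i ∈ 𝔅 := fun i hi => hv𝔅 (hvfin.mem_toFinset.1 hi)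
  -- the union is covered by the 4x-enlarged balls from w
  have hcov : (⋃ i ∈ 𝔅, ball (c i) (r i)) ⊆ ⋃ i ∈ w, ball (c i) (4 * r i) := by
    intro y hy
    simp only [Set.mem_iUnion] at hy ⊢
    obtain ⟨i, hi, hyi⟩ := hy
    obtain ⟨b, hbv, ⟨z, hz⟩, hrb⟩ := hvcov i hi
    refine ⟨b, hvfin.mem_toFinset.2 hbv, ?_⟩
    have hzi : dist z (c i) < r i := hz.1
    have hzb : dist z (c b) < r b := hz.2
    have : dist y (c b) ≤ dist y (c i) + dist (c i) z + dist z (c b) := dist_triangle4 _ _ _ _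
    rw [mem_ball] at hyi ⊢
    have h1 : dist (c i) z < r i := by rwa [dist_comm]
    nlinarith
  -- measure of 4x-ball is ≤ 2^(2a) times measure of ball
  have hdouble : ∀ i ∈ w, μ (ball (c i) (4 * r i)) ≤ 2 ^ (2 * a) * μ (ball (c i) (r i)) := by
    intro i hi
    have hri : 0 < r i := hr i (hw𝔅 i hi)
    have h2 : μ (ball (c i) (2 * (2 * r i))) ≤ 2 ^ a * μ (ball (c i) (2 * r i)) :=
      doubling _ _ (by positivity)
    have h1 : μ (ball (c i) (2 * r i)) ≤ 2 ^ a * μ (ball (c i) (r i)) := doubling _ _ hri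
    calc μ (ball (c i) (4 * r i)) = μ (ball (c i) (2 * (2 * r i))) := by rw [show (4:ℝ) * r i = 2 * (2 * r i) by ring]
      _ ≤ 2 ^ a * μ (ball (c i) (2 * r i)) := h2
      _ ≤ 2 ^ a * (2 ^ a * μ (ball (c i) (r i))) := by gcongr
      _ = 2 ^ (2 * a) * μ (ball (c i) (r i)) := by ring
  calc ENNReal.ofReal l * μ (⋃ i ∈ 𝔅, ball (c i) (r i))
      ≤ ENNReal.ofReal l * μ (⋃ i ∈ w, ball (c i) (4 * r i)) := by
        exact mul_le_mul_right (measure_mono hcov) _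
    _ ≤ ENNReal.ofReal l * ∑ i ∈ w, μ (ball (c i) (4 * r i)) := by
        gcongr; exact measure_biUnion_finset_le w _
    _ ≤ ENNReal.ofReal l * ∑ i ∈ w, 2 ^ (2 * a) * μ (ball (c i) (r i)) := by
        gcongr with i hi; exact hdouble i hi
    _ = 2 ^ (2 * a) * ∑ i ∈ w, ENNReal.ofReal l * μ (ball (c i) (r i)) := by
        rw [Finset.mul_sum, Finset.mul_sum]
        congr 1; ext i; ring
    _ ≤ 2 ^ (2 * a) * ∑ i ∈ w, ∫⁻ x in ball (c i) (r i), u x ∂μ := by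
        gcongr with i hi; exact h i (hw𝔅 i hi)
    _ = 2 ^ (2 * a) * ∫⁻ x in ⋃ i ∈ w, ball (c i) (r i), u x ∂μ := by
        rw [lintegral_biUnion_finset ?_ (fun i _ => measurableSet_ball) u]
        intro i hi j hj hij
        exact hvdisj (hvfin.mem_toFinset.1 hi) (hvfin.mem_toFinset.1 hj) hij
    _ ≤ 2 ^ (2 * a) * ∫⁻ x, u x ∂μ := by
        exact mul_le_mul_right (setLIntegral_le_lintegral _ _) _
end

section
/- Let (X,ρ,μ,a) be a doubling metric measure space and let O ⊆ X be an open set with O ≠ X. Then there exists a countable family of balls B_j = B(x_j, r_j) such that: (i) B_j ∩ B_{j'} = ∅ for j ≠ j'; (ii) ⋃_j B(x_j, 3r_j) = O; (iii) B(x_j, 7r_j) ∩ (X \ O) ≠ ∅ for every j; and (iv) every x ∈ O is contained in at most 2^{6a} of the balls B(x_j, 3r_j). -/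
open MeasureTheory Metric
open scoped ENNReal

/-- **Ball covering of an open set**: in a doubling metric measure space `(X, ρ, μ, a)`, every
open set `O ≠ X` can be covered by a countable family of balls `B_j = B(x_j, r_j)` that are
pairwise disjoint, with `⋃_j B(x_j, 3r_j) = O`, with `B(x_j, 7r_j)` meeting `X \ O`, and such
that every point of `O` lies in at most `2^{6a}` of the balls `B(x_j, 3r_j)`. -/
theorem ball_covering
    {X : Type*} [MetricSpace X] [CompleteSpace X] [LocallyCompactSpace X]
    [MeasurableSpace X] [BorelSpace X]
    (μ : Measure X) [IsLocallyFiniteMeasure μ] (hμ : μ ≠ 0)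
    {a : ℕ} (ha : 1 ≤ a)
    (doubling : ∀ (x : X) (R : ℝ), 0 < R → μ (ball x (2 * R)) ≤ 2 ^ a * μ (ball x R))
    {O : Set X} (hO : IsOpen O) (hO' : O ≠ Set.univ) :
    ∃ (ι : Type) (_ : Countable ι) (x : ι → X) (r : ι → ℝ),
      (∀ i, 0 < r i) ∧
      (Pairwise fun i j => Disjoint (ball (x i) (r i)) (ball (x j) (r j))) ∧
      (⋃ i, ball (x i) (3 * r i)) = O ∧
      (∀ i, (ball (x i) (7 * r i) ∩ Oᶜ).Nonempty) ∧
      (∀ y ∈ O, {i | y ∈ ball (x i) (3 * r i)}.encard ≤ 2 ^ (6 * a)) := by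
  classical
  -- the complement is nonempty
  have hOc : Oᶜ.Nonempty := by rwa [Set.nonempty_compl]
  obtain ⟨x₀, hx₀⟩ := hOc
  -- dispose of the trivial case `O = ∅`
  rcases Set.eq_empty_or_nonempty O with hOe | hOne
  · refine ⟨Empty, inferInstance, fun i => i.elim, fun i => i.elim, fun i => i.elim,
      fun i => i.elim, ?_, fun i => i.elim, ?_⟩
    · simp [hOe]
    · intro y hy; simp [hOe] at hy
  -- the radius function
  set r : X → ℝ := fun x => infDist x Oᶜ / 6 with hrdef
  have hrpos : ∀ x ∈ O, 0 < r x := by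
    intro x hx
    have h1 : 0 < infDist x Oᶜ := by
      rw [← hO.isClosed_compl.notMem_iff_infDist_pos ⟨x₀, hx₀⟩]
      simpa using hx
    have : r x = infDist x Oᶜ / 6 := rfl
    rw [this]; linarith
  have hre : ∀ x : X, infDist x Oᶜ = 6 * r x := by
    intro x
    have : r x = infDist x Oᶜ / 6 := rfl
    rw [this]; ring
  have hrlip : ∀ x z : X, r x ≤ r z + dist x z / 6 := by
    intro x z
    have := infDist_le_infDist_add_dist (x := x) (y := z) (s := Oᶜ)
    simp only [hrdef]
    linarith
  -- iterated doubling
  have hdouble : ∀ (k : ℕ) (x : X) (R : ℝ), 0 < R →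
      μ (ball x (2 ^ k * R)) ≤ 2 ^ (k * a) * μ (ball x R) := by
    intro k
    induction k with
    | zero => intro x R hR; simp
    | succ n ih =>
      intro x R hR
      have h1 : (2 : ℝ) ^ (n + 1) * R = 2 * (2 ^ n * R) := by ring
      rw [h1]
      calc μ (ball x (2 * (2 ^ n * R))) ≤ 2 ^ a * μ (ball x (2 ^ n * R)) :=
            doubling x _ (by positivity)
        _ ≤ 2 ^ a * (2 ^ (n * a) * μ (ball x R)) := by
            exact mul_le_mul_right (ih x R hR) _
        _ = 2 ^ ((n + 1) * a) * μ (ball x R) := by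
            rw [← mul_assoc, ← pow_add]; ring_nf
  -- all balls have finite measure
  have hfin : ∀ (x : X) (R : ℝ), μ (ball x R) < ∞ := by
    intro x R
    obtain ⟨s, hs, hsfin⟩ := μ.finiteAt_nhds x
    obtain ⟨ε, hε, hεs⟩ := Metric.mem_nhds_iff.1 hs
    obtain ⟨n, hn⟩ := pow_unbounded_of_one_lt (R / ε) (y := (2:ℝ)) one_lt_two
    have hsub : ball x R ⊆ ball x (2 ^ n * ε) := by
      apply ball_subset_ball
      rw [div_lt_iff₀ hε] at hn
      nlinarith
    calc μ (ball x R) ≤ μ (ball x (2 ^ n * ε)) := measure_mono hsub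
      _ ≤ 2 ^ (n * a) * μ (ball x ε) := hdouble n x ε hε
      _ ≤ 2 ^ (n * a) * μ s := mul_le_mul_right (measure_mono hεs) _
      _ < ∞ := ENNReal.mul_lt_top (ENNReal.pow_lt_top (by norm_num : (2:ℝ≥0∞) < ∞)) hsfin
  -- all balls have positive measure
  have hpos : ∀ (x : X) (R : ℝ), 0 < R → 0 < μ (ball x R) := by
    intro x R hR
    by_contra h
    push_neg at h
    have h0 : μ (ball x R) = 0 := le_antisymm h zero_le
    have hzero : ∀ n : ℕ, μ (ball x (2 ^ n * R)) = 0 := by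
      intro n
      refine le_antisymm ?_ zero_le
      calc μ (ball x (2 ^ n * R)) ≤ 2 ^ (n * a) * μ (ball x R) := hdouble n x R hR
        _ = 0 := by rw [h0, mul_zero]
    have huniv : (Set.univ : Set X) = ⋃ n : ℕ, ball x (2 ^ n * R) := by
      apply Set.eq_univ_of_forall ?_ |>.symm
      intro y
      obtain ⟨n, hn⟩ := pow_unbounded_of_one_lt (dist y x / R) (y := (2:ℝ)) one_lt_two
      refine Set.mem_iUnion.2 ⟨n, ?_⟩
      rw [mem_ball]
      rw [div_lt_iff₀ hR] at hn
      linarith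
    apply hμ
    rw [← Measure.measure_univ_eq_zero, huniv]
    exact le_antisymm (le_trans (measure_iUnion_le _) (by simp [hzero])) zero_le
  -- σ-finiteness
  have hsf : SigmaFinite μ := by
    apply Measure.sigmaFinite_of_countable (S := Set.range fun n : ℕ => ball x₀ n)
      (Set.countable_range _)
    · rintro s ⟨n, rfl⟩; exact hfin _ _
    · apply Set.eq_univ_of_forall
      intro y
      obtain ⟨n, hn⟩ := exists_nat_gt (dist y x₀)
      exact ⟨ball x₀ n, ⟨n, rfl⟩, by simpa [mem_ball] using hn⟩
  -- maximal disjoint family via Zorn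
  have hzorn : ∀ c ⊆ {T : Set X | T ⊆ O ∧ T.PairwiseDisjoint fun t => ball t (r t)},
      IsChain (· ⊆ ·) c → ∃ ub ∈ {T : Set X | T ⊆ O ∧ T.PairwiseDisjoint fun t => ball t (r t)},
        ∀ s ∈ c, s ⊆ ub := by
    intro c hc hchain
    refine ⟨⋃₀ c, ⟨?_, ?_⟩, fun s hs => Set.subset_sUnion_of_mem hs⟩
    · exact Set.sUnion_subset fun s hs => (hc hs).1
    · intro u hu v hv huv
      obtain ⟨su, hsu, hu'⟩ := Set.mem_sUnion.1 hu
      obtain ⟨sv, hsv, hv'⟩ := Set.mem_sUnion.1 hv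
      rcases hchain.total hsu hsv with h | h
      · exact (hc hsv).2 (h hu') hv' huv
      · exact (hc hsu).2 hu' (h hv') huv
  obtain ⟨T, hTmax⟩ := zorn_subset
      {T : Set X | T ⊆ O ∧ T.PairwiseDisjoint fun t => ball t (r t)} hzorn
  have hTO : T ⊆ O := hTmax.prop.1
  have hTdisj : T.PairwiseDisjoint fun t => ball t (r t) := hTmax.prop.2
  -- maximality consequence: every point of O is near some element of T
  have hnear : ∀ y ∈ O, ∃ t ∈ T, ¬Disjoint (ball y (r y)) (ball t (r t)) := by
    intro y hy
    by_cases hyT : y ∈ T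
    · refine ⟨y, hyT, fun h => ?_⟩
      have hne : (ball y (r y)).Nonempty := nonempty_ball.2 (hrpos y hy)
      exact hne.ne_empty (by simpa using disjoint_self.1 h)
    · by_contra h
      push_neg at h
      have hmem : insert y T ∈ {T : Set X | T ⊆ O ∧ T.PairwiseDisjoint fun t => ball t (r t)} := by
        constructor
        · exact Set.insert_subset hy hTO
        · apply hTdisj.insert
          intro t ht hne
          exact (h t ht).symm.mono_left le_rfl |>.symm
      have := hTmax.eq_of_subset hmem (Set.subset_insert y T)
      exact hyT (this ▸ Set.mem_insert y T)
  -- covering property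
  have hcover : ∀ y ∈ O, ∃ t ∈ T, y ∈ ball t (3 * r t) := by
    intro y hy
    obtain ⟨t, htT, hnd⟩ := hnear y hy
    obtain ⟨z, hz1, hz2⟩ := Set.not_disjoint_iff.1 hnd
    rw [mem_ball] at hz1 hz2
    have hd : dist y t < r y + r t := by
      calc dist y t ≤ dist y z + dist z t := dist_triangle y z t
        _ = dist z y + dist z t := by rw [dist_comm]
        _ < r y + r t := by linarith
    have hry : r y < 7 / 5 * r t := by
      have := hrlip y t
      linarith
    have hrt : 0 < r t := hrpos t (hTO htT)
    exact ⟨t, htT, mem_ball.2 (by linarith)⟩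
  -- balls with triple radius are inside O
  have hball_sub : ∀ t ∈ T, ball t (3 * r t) ⊆ O := by
    intro t htT z hz
    rw [mem_ball] at hz
    by_contra hzO
    have : infDist t Oᶜ ≤ dist t z := infDist_le_dist_of_mem hzO
    rw [dist_comm] at hz
    have hrt : 0 < r t := hrpos t (hTO htT)
    rw [hre] at this
    linarith
  -- T is countable
  have hTc : Countable ↥T := by
    have h := Measure.countable_meas_pos_of_disjoint_iUnion (μ := μ)
      (As := fun t : T => ball (t : X) (r t)) (fun t => measurableSet_ball)
      (fun i j hij => hTdisj i.2 j.2 (Subtype.coe_ne_coe.2 hij))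
    have heq : {i : T | 0 < μ (ball (i : X) (r i))} = Set.univ := by
      apply Set.eq_univ_of_forall
      intro t
      exact hpos _ _ (hrpos _ (hTO t.2))
    rw [heq] at h
    exact Set.countable_univ_iff.1 h
  -- T is nonempty
  obtain ⟨y₀, hy₀⟩ := hOne
  obtain ⟨t₀, ht₀T, _⟩ := hcover y₀ hy₀
  have hTne : Nonempty ↥T := ⟨⟨t₀, ht₀T⟩⟩
  -- build the index type in `Type 0`
  obtain ⟨f, hf⟩ := exists_injective_nat ↥T
  set ι : Type := ↥(Set.range f) with hι
  have hgι : ∀ n : ι, f (Function.invFun f (n : ℕ)) = (n : ℕ) := by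
    rintro ⟨n, t, rfl⟩
    exact Function.invFun_eq ⟨t, rfl⟩
  set g : ι → ↥T := fun n => Function.invFun f (n : ℕ) with hg
  have hginj : Function.Injective g := by
    intro n m hnm
    have : f (g n) = f (g m) := by rw [hnm]
    rw [hgι n, hgι m] at this
    exact Subtype.ext this
  have hgsurj : ∀ t : ↥T, ∃ n : ι, g n = t := by
    intro t
    refine ⟨⟨f t, Set.mem_range_self t⟩, ?_⟩
    simp only [hg]
    exact Function.leftInverse_invFun hf t
  set xf : ι → X := fun n => (g n : X) with hxf
  have hxfT : ∀ n, xf n ∈ T := fun n => (g n).2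
  have hxfinj : Function.Injective xf := fun n m h => hginj (Subtype.ext h)
  refine ⟨ι, inferInstance, xf, fun n => r (xf n), ?_, ?_, ?_, ?_, ?_⟩
  · exact fun i => hrpos _ (hTO (hxfT i))
  · intro i j hij
    exact hTdisj (hxfT i) (hxfT j) (fun h => hij (hxfinj h))
  · apply Set.Subset.antisymm
    · exact Set.iUnion_subset fun i => hball_sub _ (hxfT i)
    · intro y hy
      obtain ⟨t, htT, hyt⟩ := hcover y hy
      obtain ⟨n, hn⟩ := hgsurj ⟨t, htT⟩
      refine Set.mem_iUnion.2 ⟨n, ?_⟩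
      have hxt : xf n = t := congrArg Subtype.val hn
      show y ∈ ball (xf n) (3 * r (xf n))
      rwa [hxt]
  · intro i
    have hrt : 0 < r (xf i) := hrpos _ (hTO (hxfT i))
    have : infDist (xf i) Oᶜ < 7 * r (xf i) := by
      rw [hre]; linarith
    obtain ⟨z, hzO, hz⟩ := (infDist_lt_iff ⟨x₀, hx₀⟩).1 this
    exact ⟨z, mem_ball.2 (by rwa [dist_comm]), hzO⟩
  · -- bounded overlap
    intro y hy
    set s := {i : ι | y ∈ ball (xf i) (3 * r (xf i))} with hs
    by_contra hcon
    push_neg at hcon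
    have hry : 0 < r y := hrpos y hy
    -- key measure bound for any finite subset
    have key : ∀ F : Finset ι, ↑F ⊆ s → (F.card : ℕ) ≤ 2 ^ (4 * a) := by
      intro F hF
      set m := μ (ball y (8 * r y)) with hm
      have hm0 : 0 < m := hpos _ _ (by linarith)
      have hmtop : m < ∞ := hfin _ _
      -- radius comparison for i ∈ F
      have hcmp : ∀ i ∈ F, dist y (xf i) < 3 * r (xf i) ∧ r y ≤ 3 / 2 * r (xf i) ∧
          r (xf i) ≤ 2 * r y := by
        intro i hiF
        have hiy : y ∈ ball (xf i) (3 * r (xf i)) := hF hiF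
        rw [mem_ball] at hiy
        have h1 := hrlip y (xf i)
        have h2 := hrlip (xf i) y
        rw [dist_comm] at h2
        exact ⟨hiy, by linarith, by linarith⟩
      have hupper : ∀ i ∈ F, m ≤ 2 ^ (4 * a) * μ (ball (xf i) (r (xf i))) := by
        intro i hiF
        obtain ⟨hd, h1, h2⟩ := hcmp i hiF
        have hri : 0 < r (xf i) := hrpos _ (hTO (hxfT i))
        have hsub : ball y (8 * r y) ⊆ ball (xf i) (2 ^ 4 * r (xf i)) := by
          intro z hz
          rw [mem_ball] at hz ⊢
          calc dist z (xf i) ≤ dist z y + dist y (xf i) := dist_triangle z y (xf i)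
            _ < 8 * r y + 3 * r (xf i) := by linarith
            _ ≤ 2 ^ 4 * r (xf i) := by norm_num; linarith
        calc m ≤ μ (ball (xf i) (2 ^ 4 * r (xf i))) := measure_mono hsub
          _ ≤ 2 ^ (4 * a) * μ (ball (xf i) (r (xf i))) := hdouble 4 _ _ hri
      have hlower : ∀ i ∈ F, ball (xf i) (r (xf i)) ⊆ ball y (8 * r y) := by
        intro i hiF z hz
        obtain ⟨hd, h1, h2⟩ := hcmp i hiF
        rw [mem_ball] at hz ⊢
        rw [dist_comm] at hd
        calc dist z y ≤ dist z (xf i) + dist (xf i) y := dist_triangle z (xf i) y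
          _ < r (xf i) + 3 * r (xf i) := by linarith
          _ ≤ 8 * r y := by linarith
      have hdisjF : (↑F : Set ι).PairwiseDisjoint fun i => ball (xf i) (r (xf i)) := by
        intro i _ j _ hij
        exact hTdisj (hxfT i) (hxfT j) (fun h => hij (hxfinj h))
      have hsum : (F.card : ℝ≥0∞) * m ≤ 2 ^ (4 * a) * m := by
        calc (F.card : ℝ≥0∞) * m = ∑ _i ∈ F, m := by
              rw [Finset.sum_const, nsmul_eq_mul]
          _ ≤ ∑ i ∈ F, 2 ^ (4 * a) * μ (ball (xf i) (r (xf i))) :=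
              Finset.sum_le_sum hupper
          _ = 2 ^ (4 * a) * ∑ i ∈ F, μ (ball (xf i) (r (xf i))) := by
              rw [Finset.mul_sum]
          _ = 2 ^ (4 * a) * μ (⋃ i ∈ F, ball (xf i) (r (xf i))) := by
              rw [measure_biUnion_finset hdisjF (fun i _ => measurableSet_ball)]
          _ ≤ 2 ^ (4 * a) * m := by
              apply mul_le_mul_right
              exact measure_mono (Set.iUnion₂_subset hlower)
      have hcard : (F.card : ℝ≥0∞) ≤ 2 ^ (4 * a) := by
        rwa [ENNReal.mul_le_mul_iff_left hm0.ne' hmtop.ne] at hsum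
      have : (F.card : ℝ≥0∞) ≤ ((2 ^ (4 * a) : ℕ) : ℝ≥0∞) := by
        rwa [Nat.cast_pow, Nat.cast_ofNat]
      exact_mod_cast this
    -- derive contradiction
    have hlt : (2 : ℕ∞) ^ (6 * a) < s.encard := hcon
    have h1 : ((2 ^ (6 * a) + 1 : ℕ) : ℕ∞) ≤ s.encard := by
      have := Order.add_one_le_of_lt hlt
      rwa [Nat.cast_add, Nat.cast_pow, Nat.cast_ofNat, Nat.cast_one]
    obtain ⟨u, hus, hu⟩ := Set.exists_subset_encard_eq h1
    have hufin : u.Finite := Set.finite_of_encard_eq_coe hu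
    rw [hufin.encard_eq_coe_toFinset_card] at hu
    have hcard : hufin.toFinset.card = 2 ^ (6 * a) + 1 := by exact_mod_cast hu
    have hsubs : ↑hufin.toFinset ⊆ s := by rwa [hufin.coe_toFinset]
    have := key hufin.toFinset hsubs
    rw [hcard] at this
    have h46 : (2 : ℕ) ^ (4 * a) ≤ 2 ^ (6 * a) :=
      Nat.pow_le_pow_right (by norm_num) (by omega)
    omega
end
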